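/- arXiv:2501.10707 — 4 statements merged into one kernel-verified Lean document; each statement's English description precedes it below -/
import Mathlib

section
/- Let D ⊂ (0,∞) be a compact interval, ε₀ > 0, and let φ, ρ : [0, ε₀^{1/3}) × D → ℝ be C^∞-smooth. Define Δ(ε, J) = sin(π·J/ε − π/2 + ε^{2/3}·φ(ε^{1/3}, J)) + ε^{2/3}·ρ(ε^{1/3}, J) for ε ∈ (0, ε₀) and J ∈ D. Then there exist ε₁ ∈ (0, ε₀] and two C^∞-smooth functions φ̄(·,·,+1), φ̄(·,·,−1) : [0, ε₁^{1/3}) × D → ℝ such that for all ε ∈ (0, ε₁) and J ∈ D: Δ(ε, J) = 0 if and only if there is an n ∈ ℕ with J = n·ε + (1/2)·ε + ε^{5/3}·φ̄(ε^{1/3}, J, (−1)ⁿ). -/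
open Set

open scoped ContDiff Topology

noncomputable def sinDslope : ℝ → ℝ := dslope Real.sin 0

noncomputable def arcsinRatio : ℝ → ℝ := fun u => (sinDslope (Real.arcsin u))⁻¹

lemma contDiffAt_sinDslope (t : ℝ) : ContDiffAt ℝ ω sinDslope t := by
  rcases eq_or_ne t 0 with rfl | ht
  · have h1 : AnalyticAt ℝ Real.sin 0 :=
      ((Real.contDiff_sin (n := ω)).contDiffAt).analyticAt
    obtain ⟨p, hp⟩ := h1
    exact (hp.has_fpower_series_dslope_fslope.analyticAt).contDiffAt
  · have h1 : ContDiffAt ℝ ω (fun s : ℝ => Real.sin s / s) t :=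
      (Real.contDiff_sin.contDiffAt).div contDiffAt_id ht
    apply h1.congr_of_eventuallyEq
    filter_upwards [isOpen_compl_singleton.mem_nhds ht] with s hs
    rw [sinDslope, dslope_of_ne _ hs, slope_def_field, Real.sin_zero, sub_zero, sub_zero]

lemma sinDslope_ne_zero {t : ℝ} (ht : t ∈ Icc (-(Real.pi/2)) (Real.pi/2)) :
    sinDslope t ≠ 0 := by
  have hπ := Real.pi_pos
  rcases eq_or_ne t 0 with rfl | h
  · rw [sinDslope, dslope_same, Real.deriv_sin, Real.cos_zero]
    norm_num
  · rw [sinDslope, dslope_of_ne _ h, slope_def_field, Real.sin_zero, sub_zero, sub_zero]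
    apply div_ne_zero _ h
    rcases lt_or_gt_of_ne h with hneg | hpos
    · have h1 : 0 < Real.sin (-t) :=
        Real.sin_pos_of_pos_of_lt_pi (by linarith [ht.1]) (by linarith [ht.1])
      rw [Real.sin_neg] at h1
      linarith
    · have h1 : 0 < Real.sin t :=
        Real.sin_pos_of_pos_of_lt_pi hpos (by linarith [ht.2])
      linarith

lemma contDiffAt_arcsin_omega {u : ℝ} (h1 : -1 < u) (h2 : u < 1) :
    ContDiffAt ℝ ω Real.arcsin u := by
  set t := Real.arcsin u with htdef
  have hu1 : -1 ≤ u := h1.le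
  have hu2 : u ≤ 1 := h2.le
  have ht1 : -(Real.pi/2) < t := Real.neg_pi_div_two_lt_arcsin.2 h1
  have ht2 : t < Real.pi/2 := Real.arcsin_lt_pi_div_two.2 h2
  have hcos : Real.cos t ≠ 0 := (Real.cos_pos_of_mem_Ioo ⟨ht1, ht2⟩).ne'
  have hs : HasStrictDerivAt Real.sin (Real.cos t) t := Real.hasStrictDerivAt_sin t
  have hF := hs.hasStrictFDerivAt_equiv hcos
  set P := hF.toOpenPartialHomeomorph Real.sin with hP
  have hmem : t ∈ P.source := hF.mem_toOpenPartialHomeomorph_source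
  have himg : Real.sin t ∈ P.target := hF.image_mem_toOpenPartialHomeomorph_target
  have hsin_t : Real.sin t = u := Real.sin_arcsin hu1 hu2
  have hu_target : u ∈ P.target := hsin_t ▸ himg
  have hcoe : ⇑P = Real.sin := hF.toOpenPartialHomeomorph_coe
  have hsymm_t : P.symm u = t := by
    rw [← hsin_t]
    have := P.left_inv hmem
    rw [hcoe] at this
    exact this
  have hsm : ContDiffAt ℝ ω (P.symm) u := by
    apply P.contDiffAt_symm_deriv (f₀' := Real.cos t) hcos hu_target
    · rw [hsymm_t, hcoe]; exact hs.hasDerivAt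
    · rw [hsymm_t, hcoe]; exact Real.contDiff_sin.contDiffAt
  have hev : Real.arcsin =ᶠ[𝓝 u] P.symm := by
    have hri : ∀ᶠ v in 𝓝 u, P (P.symm v) = v := P.eventually_right_inverse hu_target
    have hcont : ContinuousAt P.symm u := P.continuousAt_symm hu_target
    have hmemIoo : ∀ᶠ v in 𝓝 u, P.symm v ∈ Ioo (-(Real.pi/2)) (Real.pi/2) := by
      apply hcont.eventually_mem
      rw [hsymm_t]
      exact isOpen_Ioo.mem_nhds ⟨ht1, ht2⟩
    filter_upwards [hri, hmemIoo] with v hv1 hv2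
    rw [hcoe] at hv1
    conv_lhs => rw [← hv1]
    exact Real.arcsin_sin hv2.1.le hv2.2.le
  exact hsm.congr_of_eventuallyEq hev

lemma contDiffAt_arcsinRatio {u : ℝ} (h1 : -1 < u) (h2 : u < 1) :
    ContDiffAt ℝ ω arcsinRatio u := by
  have h3 := Real.arcsin_mem_Icc u
  have hcomp : ContDiffAt ℝ ω (fun v => sinDslope (Real.arcsin v)) u :=
    (contDiffAt_sinDslope (Real.arcsin u)).comp u (contDiffAt_arcsin_omega h1 h2)
  exact hcomp.inv (sinDslope_ne_zero h3)

lemma mul_arcsinRatio {u : ℝ} (h1 : -1 ≤ u) (h2 : u ≤ 1) :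
    u * arcsinRatio u = Real.arcsin u := by
  rcases eq_or_ne u 0 with rfl | hu
  · simp [Real.arcsin_zero]
  · have ht : Real.arcsin u ≠ 0 := fun h => hu (Real.arcsin_eq_zero_iff.1 h)
    rw [arcsinRatio, sinDslope, dslope_of_ne _ ht, slope_def_field, Real.sin_zero, sub_zero,
      sub_zero, Real.sin_arcsin h1 h2, inv_div]
    field_simp

lemma sin_eq_sin_iff (x t : ℝ) :
    Real.sin x = Real.sin t ↔ ∃ k : ℤ, x = k * Real.pi + (-1 : ℝ) ^ k * t := by
  have hπ := Real.pi_pos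
  constructor
  · intro h
    have hz : 2 * Real.sin ((x - t)/2) * Real.cos ((x + t)/2) = 0 := by
      rw [← Real.sin_sub_sin, h, sub_self]
    have h0 : Real.sin ((x - t)/2) = 0 ∨ Real.cos ((x + t)/2) = 0 := by
      rcases mul_eq_zero.1 hz with h' | h'
      · rcases mul_eq_zero.1 h' with h'' | h''
        · norm_num at h''
        · exact Or.inl h''
      · exact Or.inr h'
    rcases h0 with h0 | h0
    · obtain ⟨n, hn⟩ := Real.sin_eq_zero_iff.1 h0
      refine ⟨2 * n, ?_⟩
      have heven : Even (2 * n) := even_two_mul n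
      rw [heven.neg_one_zpow, one_mul]
      push_cast
      push_cast at hn
      linarith
    · obtain ⟨n, hn⟩ := Real.cos_eq_zero_iff.1 h0
      refine ⟨2 * n + 1, ?_⟩
      have hodd : Odd (2 * n + 1) := odd_two_mul_add_one n
      rw [hodd.neg_one_zpow]
      push_cast
      push_cast at hn
      linarith
  · rintro ⟨k, rfl⟩
    rcases Int.even_or_odd k with hk | hk
    · have hpow : (-1:ℝ)^k = 1 := hk.neg_one_zpow
      obtain ⟨m, hm⟩ := hk
      have h1 : (k : ℝ) * Real.pi + (-1:ℝ)^k * t = t + (m : ℝ) * (2 * Real.pi) := by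
        rw [hpow, one_mul, hm]; push_cast; ring
      rw [h1, Real.sin_add_int_mul_two_pi]
    · have hpow : (-1:ℝ)^k = -1 := hk.neg_one_zpow
      obtain ⟨m, hm⟩ := hk
      have h1 : (k : ℝ) * Real.pi + (-1:ℝ)^k * t = (Real.pi - t) + (m : ℝ) * (2 * Real.pi) := by
        rw [hpow, hm]; push_cast; ring
      rw [h1, Real.sin_add_int_mul_two_pi, Real.sin_pi_sub]

lemma lin_equiv {p e : ℝ} (hp : p ≠ 0) (he : e ≠ 0) (J F G k : ℝ) :
    (p * J / e - p / 2 + F = k * p + -G) ↔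
      (J = k * e + 1/2 * e + -(e / p) * (F + G)) := by
  constructor
  · intro h
    have h1 : p * J / e = k * p + -G + p / 2 - F := by linarith
    rw [div_eq_iff he] at h1
    apply mul_left_cancel₀ hp
    have hpe : p * (e / p) = e := by field_simp
    calc p * J = (k * p + -G + p / 2 - F) * e := h1
      _ = p * (k * e + 1/2 * e) + -(p * (e / p)) * (F + G) := by rw [hpe]; ring
      _ = p * (k * e + 1/2 * e + -(e / p) * (F + G)) := by ring
  · intro h
    rw [h]
    field_simp
    ring

/-- Solving the bifurcation equation `Δ(ε, J) = 0`, where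
`Δ(ε, J) = sin(πJ/ε - π/2 + ε^{2/3} φ(ε^{1/3}, J)) + ε^{2/3} ρ(ε^{1/3}, J)` on a
compact interval `D = [a, b] ⊂ (0, ∞)`: there exist `ε₁ ∈ (0, ε₀]` and smooth
functions `φ̄(·,·,±1)` such that for `ε ∈ (0, ε₁)` and `J ∈ D`, `Δ(ε, J) = 0`
iff `J = n ε + ε/2 + ε^{5/3} φ̄(ε^{1/3}, J, (-1)ⁿ)` for some `n ∈ ℕ`. -/
theorem stmt11 (a b : ℝ) (ha : 0 < a) (hab : a ≤ b)
    (ε₀ : ℝ) (hε₀ : 0 < ε₀)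
    (φ ρ : ℝ → ℝ → ℝ)
    (hφ : ContDiffOn ℝ (⊤ : ℕ∞) (fun p : ℝ × ℝ => φ p.1 p.2)
      (Ico 0 (ε₀ ^ ((1 : ℝ)/3)) ×ˢ Icc a b))
    (hρ : ContDiffOn ℝ (⊤ : ℕ∞) (fun p : ℝ × ℝ => ρ p.1 p.2)
      (Ico 0 (ε₀ ^ ((1 : ℝ)/3)) ×ˢ Icc a b)) :
    ∃ ε₁ : ℝ, 0 < ε₁ ∧ ε₁ ≤ ε₀ ∧
      ∃ φbar : ℝ → ℝ → ℝ → ℝ,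
        (∀ σ ∈ ({1, -1} : Set ℝ),
          ContDiffOn ℝ (⊤ : ℕ∞) (fun p : ℝ × ℝ => φbar p.1 p.2 σ)
            (Ico 0 (ε₁ ^ ((1 : ℝ)/3)) ×ˢ Icc a b)) ∧
        ∀ ε : ℝ, ε ∈ Ioo 0 ε₁ → ∀ J : ℝ, J ∈ Icc a b →
          (Real.sin (Real.pi * J / ε - Real.pi / 2 +
              ε ^ ((2 : ℝ)/3) * φ (ε ^ ((1 : ℝ)/3)) J) +
            ε ^ ((2 : ℝ)/3) * ρ (ε ^ ((1 : ℝ)/3)) J = 0 ↔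
          ∃ n : ℕ,
            J = (n : ℝ) * ε + (1/2) * ε +
              ε ^ ((5 : ℝ)/3) * φbar (ε ^ ((1 : ℝ)/3)) J ((-1 : ℝ) ^ n)) := by
  have hπ : 0 < Real.pi := Real.pi_pos
  set c := ε₀ ^ ((1 : ℝ)/3) with hc_def
  have hc : 0 < c := Real.rpow_pos_of_pos hε₀ _
  -- uniform bound on φ and ρ on a compact set
  have hK : IsCompact ((Icc (0:ℝ) (c/2)) ×ˢ (Icc a b)) := isCompact_Icc.prod isCompact_Icc
  have hKsub : (Icc (0:ℝ) (c/2)) ×ˢ (Icc a b) ⊆ (Ico 0 c) ×ˢ (Icc a b) := by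
    apply prod_mono_left
    intro x hx
    exact ⟨hx.1, lt_of_le_of_lt hx.2 (by linarith)⟩
  obtain ⟨M₁, hM₁⟩ := hK.exists_bound_of_continuousOn (hφ.continuousOn.mono hKsub)
  obtain ⟨M₂, hM₂⟩ := hK.exists_bound_of_continuousOn (hρ.continuousOn.mono hKsub)
  set M := max M₁ M₂ + 1 with hM_def
  have hmem0 : ((0:ℝ), a) ∈ (Icc (0:ℝ) (c/2)) ×ˢ (Icc a b) :=
    ⟨⟨le_refl 0, by positivity⟩, ⟨le_refl a, hab⟩⟩
  have hM₁0 : 0 ≤ M₁ := le_trans (norm_nonneg _) (hM₁ _ hmem0)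
  have hM0 : 0 < M := by
    have := le_max_left M₁ M₂
    rw [hM_def]; linarith
  have hMφ : ∀ x J, x ∈ Icc (0:ℝ) (c/2) → J ∈ Icc a b → |φ x J| ≤ M := by
    intro x J hx hJ
    have h := hM₁ (x, J) ⟨hx, hJ⟩
    rw [Real.norm_eq_abs] at h
    have := le_max_left M₁ M₂
    rw [hM_def]; linarith
  have hMρ : ∀ x J, x ∈ Icc (0:ℝ) (c/2) → J ∈ Icc a b → |ρ x J| ≤ M := by
    intro x J hx hJ
    have h := hM₂ (x, J) ⟨hx, hJ⟩
    rw [Real.norm_eq_abs] at h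
    have := le_max_right M₁ M₂
    rw [hM_def]; linarith
  -- choice of ε₁
  have t13 : Filter.Tendsto (fun t : ℝ => t ^ ((1:ℝ)/3)) (𝓝[>] 0) (𝓝 0) := by
    have hct : ContinuousAt (fun t : ℝ => t ^ ((1:ℝ)/3)) 0 :=
      Real.continuousAt_rpow_const 0 _ (Or.inr (by norm_num))
    have h0 : (0:ℝ) ^ ((1:ℝ)/3) = 0 := Real.zero_rpow (by norm_num)
    simpa [h0] using hct.tendsto.mono_left nhdsWithin_le_nhds
  have t23 : Filter.Tendsto (fun t : ℝ => t ^ ((2:ℝ)/3) * M) (𝓝[>] 0) (𝓝 0) := by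
    have hct : ContinuousAt (fun t : ℝ => t ^ ((2:ℝ)/3)) 0 :=
      Real.continuousAt_rpow_const 0 _ (Or.inr (by norm_num))
    have h0 : (0:ℝ) ^ ((2:ℝ)/3) = 0 := Real.zero_rpow (by norm_num)
    have h1 : Filter.Tendsto (fun t : ℝ => t ^ ((2:ℝ)/3)) (𝓝[>] 0) (𝓝 ((0:ℝ) ^ ((2:ℝ)/3))) :=
      hct.tendsto.mono_left (nhdsWithin_le_nhds (s := Ioi (0:ℝ)))
    have := h1.mul_const M
    simpa [h0] using this
  have hev : ∀ᶠ t in 𝓝[>] (0:ℝ),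
      (t ≤ ε₀ ∧ t ≤ a ∧ t ^ ((1:ℝ)/3) ≤ c/2 ∧ t ^ ((2:ℝ)/3) * M ≤ 1/2) := by
    have e1 : ∀ᶠ t in 𝓝[>] (0:ℝ), t ≤ ε₀ := by
      filter_upwards [Ioo_mem_nhdsGT hε₀] with t ht
      exact ht.2.le
    have e2 : ∀ᶠ t in 𝓝[>] (0:ℝ), t ≤ a := by
      filter_upwards [Ioo_mem_nhdsGT ha] with t ht
      exact ht.2.le
    have e3 := t13.eventually_le_const (by positivity : (0:ℝ) < c/2)
    have e4 := t23.eventually_le_const (by norm_num : (0:ℝ) < 1/2)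
    filter_upwards [e1, e2, e3, e4] with t h1 h2 h3 h4
    exact ⟨h1, h2, h3, h4⟩
  obtain ⟨ε₁, hP, hε₁pos⟩ := (hev.and eventually_mem_nhdsWithin).exists
  obtain ⟨hP0, hPa, hP13, hP23⟩ := hP
  rw [mem_Ioi] at hε₁pos
  have hε₁13nonneg : 0 ≤ ε₁ ^ ((1:ℝ)/3) := Real.rpow_nonneg hε₁pos.le _
  -- the function φbar
  refine ⟨ε₁, hε₁pos, hP0, fun x J σ =>
    -(φ x J + σ * (ρ x J * arcsinRatio (x * x * ρ x J))) / Real.pi, ?_, ?_⟩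
  · -- smoothness
    intro σ _
    have hsub2 : (Ico (0:ℝ) (ε₁ ^ ((1:ℝ)/3))) ×ˢ (Icc a b) ⊆ (Ico 0 c) ×ˢ (Icc a b) := by
      apply prod_mono_left
      intro x hx
      exact ⟨hx.1, lt_of_lt_of_le hx.2 (hP13.trans (by linarith))⟩
    have hφ' := hφ.mono hsub2
    have hρ' := hρ.mono hsub2
    have hg : ContDiffOn ℝ (⊤ : ℕ∞) (fun p : ℝ × ℝ => p.1 * p.1 * ρ p.1 p.2)
        ((Ico (0:ℝ) (ε₁ ^ ((1:ℝ)/3))) ×ˢ (Icc a b)) :=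
      ((contDiff_fst.contDiffOn.mul contDiff_fst.contDiffOn).mul hρ')
    have hmaps : MapsTo (fun p : ℝ × ℝ => p.1 * p.1 * ρ p.1 p.2)
        ((Ico (0:ℝ) (ε₁ ^ ((1:ℝ)/3))) ×ˢ (Icc a b)) (Ioo (-1:ℝ) 1) := by
      intro p hp
      have hx1 : 0 ≤ p.1 := hp.1.1
      have hx2 : p.1 < ε₁ ^ ((1:ℝ)/3) := hp.1.2
      have hxx : p.1 * p.1 ≤ ε₁ ^ ((2:ℝ)/3) := by
        calc p.1 * p.1 ≤ ε₁ ^ ((1:ℝ)/3) * ε₁ ^ ((1:ℝ)/3) :=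
              mul_le_mul hx2.le hx2.le hx1 hε₁13nonneg
          _ = ε₁ ^ ((2:ℝ)/3) := by
              rw [← Real.rpow_add hε₁pos]; norm_num
      have hρb : |ρ p.1 p.2| ≤ M :=
        hMρ p.1 p.2 ⟨hx1, hx2.le.trans hP13⟩ hp.2
      have habs : |p.1 * p.1 * ρ p.1 p.2| ≤ 1/2 := by
        rw [abs_mul, abs_of_nonneg (mul_self_nonneg p.1)]
        calc p.1 * p.1 * |ρ p.1 p.2| ≤ ε₁ ^ ((2:ℝ)/3) * M :=
              mul_le_mul hxx hρb (abs_nonneg _) (Real.rpow_nonneg hε₁pos.le _)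
          _ ≤ 1/2 := hP23
      show p.1 * p.1 * ρ p.1 p.2 ∈ Ioo (-1:ℝ) 1
      rw [mem_Ioo, ← abs_lt]
      linarith [habs]
    have hA : ContDiffOn ℝ (⊤ : ℕ∞) arcsinRatio (Ioo (-1:ℝ) 1) := fun u hu =>
      ((contDiffAt_arcsinRatio hu.1 hu.2).of_le le_top).contDiffWithinAt
    have hcomp := hA.comp hg hmaps
    exact ((hφ'.add (contDiffOn_const.mul (hρ'.mul hcomp))).neg).div_const _
  · -- the equivalence
    intro ε hε J hJ
    dsimp only
    obtain ⟨hεpos, hεlt⟩ := hε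
    set x := ε ^ ((1:ℝ)/3) with hx_def
    have hx0 : 0 ≤ x := (Real.rpow_pos_of_pos hεpos _).le
    have hxlt : x < ε₁ ^ ((1:ℝ)/3) := by
      rw [hx_def]
      exact Real.rpow_lt_rpow hεpos.le hεlt (by norm_num)
    have hx2 : ε ^ ((2:ℝ)/3) = x * x := by
      rw [hx_def, ← Real.rpow_add hεpos]; norm_num
    have hx5 : ε ^ ((5:ℝ)/3) = ε * ε ^ ((2:ℝ)/3) := by
      have h53 : (5:ℝ)/3 = 1 + 2/3 := by norm_num
      rw [h53, Real.rpow_add hεpos, Real.rpow_one]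
    set u := ε ^ ((2:ℝ)/3) * ρ x J with hu_def
    have hxc : x ≤ c/2 := le_trans hxlt.le hP13
    have hρM : |ρ x J| ≤ M := hMρ x J ⟨hx0, hxc⟩ hJ
    have hφM : |φ x J| ≤ M := hMφ x J ⟨hx0, hxc⟩ hJ
    have hε23pos : 0 < ε ^ ((2:ℝ)/3) := Real.rpow_pos_of_pos hεpos _
    have hε23 : ε ^ ((2:ℝ)/3) ≤ ε₁ ^ ((2:ℝ)/3) :=
      Real.rpow_le_rpow hεpos.le hεlt.le (by norm_num)
    have huabs : |u| ≤ 1/2 := by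
      rw [hu_def, abs_mul, abs_of_pos hε23pos]
      calc ε ^ ((2:ℝ)/3) * |ρ x J| ≤ ε₁ ^ ((2:ℝ)/3) * M :=
            mul_le_mul hε23 hρM (abs_nonneg _) (Real.rpow_nonneg hε₁pos.le _)
        _ ≤ 1/2 := hP23
    have huabs' := abs_le.1 huabs
    have hu1 : -1 ≤ u := by linarith [huabs'.1]
    have hu2 : u ≤ 1 := by linarith [huabs'.2]
    have harc : u * arcsinRatio u = Real.arcsin u := mul_arcsinRatio hu1 hu2
    have harcmem := Real.arcsin_mem_Icc u
    have harcabs : |Real.arcsin u| ≤ Real.pi/2 := abs_le.2 ⟨harcmem.1, harcmem.2⟩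
    -- the key algebraic identity
    have hkey : ∀ σ : ℝ,
        ε ^ ((5:ℝ)/3) * (-(φ x J + σ * (ρ x J * arcsinRatio (x * x * ρ x J))) / Real.pi)
          = -(ε / Real.pi) * (ε ^ ((2:ℝ)/3) * φ x J + σ * Real.arcsin u) := by
      intro σ
      have h1 : x * x * ρ x J = u := by rw [hu_def, hx2]
      rw [h1, hx5, ← harc, hu_def]
      field_simp
    set θ := Real.pi * J / ε - Real.pi / 2 + ε ^ ((2:ℝ)/3) * φ x J with hθ_def
    have hA : (Real.sin θ + u = 0) ↔
        ∃ k : ℤ, θ = k * Real.pi + (-1:ℝ)^k * Real.arcsin (-u) := by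
      rw [← sin_eq_sin_iff, Real.sin_arcsin (by linarith) (by linarith)]
      constructor <;> intro h <;> linarith
    have hB : ∀ k : ℤ, (θ = k * Real.pi + (-1:ℝ)^k * Real.arcsin (-u))
        ↔ J = (k:ℝ) * ε + (1/2) * ε + ε ^ ((5:ℝ)/3) *
            (-(φ x J + (-1:ℝ)^k * (ρ x J * arcsinRatio (x * x * ρ x J))) / Real.pi) := by
      intro k
      have hrw : (-1:ℝ)^k * Real.arcsin (-u) = -((-1:ℝ)^k * Real.arcsin u) := by
        rw [Real.arcsin_neg]; ring
      rw [hrw, hkey ((-1:ℝ)^k), hθ_def]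
      exact lin_equiv hπ.ne' hεpos.ne' J _ _ _
    -- bound needed to rule out negative k
    have hbound : ∀ σ : ℝ, |σ| = 1 →
        |ε ^ ((5:ℝ)/3) * (-(φ x J + σ * (ρ x J * arcsinRatio (x * x * ρ x J))) / Real.pi)| ≤ ε := by
      intro σ hσ
      rw [hkey σ, abs_mul, abs_neg, abs_div, abs_of_pos hεpos, abs_of_pos hπ]
      have hb1 : |ε ^ ((2:ℝ)/3) * φ x J + σ * Real.arcsin u| ≤ 1/2 + Real.pi/2 := by
        calc |ε ^ ((2:ℝ)/3) * φ x J + σ * Real.arcsin u|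
            ≤ |ε ^ ((2:ℝ)/3) * φ x J| + |σ * Real.arcsin u| := abs_add_le _ _
          _ = ε ^ ((2:ℝ)/3) * |φ x J| + |Real.arcsin u| := by
              rw [abs_mul, abs_mul, hσ, one_mul, abs_of_pos hε23pos]
          _ ≤ ε₁ ^ ((2:ℝ)/3) * M + Real.pi/2 := by
              have := mul_le_mul hε23 hφM (abs_nonneg _) (Real.rpow_nonneg hε₁pos.le _)
              linarith
          _ ≤ 1/2 + Real.pi/2 := by linarith
      have hπ3 := Real.pi_gt_three
      calc ε / Real.pi * |ε ^ ((2:ℝ)/3) * φ x J + σ * Real.arcsin u|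
          ≤ ε / Real.pi * (1/2 + Real.pi/2) := by
            apply mul_le_mul_of_nonneg_left hb1 (by positivity)
        _ ≤ ε / Real.pi * Real.pi := by
            apply mul_le_mul_of_nonneg_left (by linarith) (by positivity)
        _ = ε := by field_simp
    constructor
    · intro h
      obtain ⟨k, hk⟩ := hA.1 h
      have hk' := (hB k).1 hk
      have hσabs : |(-1:ℝ)^k| = 1 := by
        rcases Int.even_or_odd k with hk2 | hk2
        · rw [hk2.neg_one_zpow, abs_one]
        · rw [hk2.neg_one_zpow, abs_neg, abs_one]
      have hknn : 0 ≤ k := by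
        by_contra hneg
        push_neg at hneg
        have hkle : (k:ℝ) ≤ -1 := by
          have : k ≤ -1 := by omega
          exact_mod_cast this
        have hb := (abs_le.1 (hbound ((-1:ℝ)^k) hσabs)).2
        have hJa : a ≤ J := hJ.1
        have hmul : (k:ℝ) * ε ≤ -1 * ε := mul_le_mul_of_nonneg_right hkle hεpos.le
        linarith [hk', hb, hJa, hεlt, hPa, hεpos, hmul]
      refine ⟨k.toNat, ?_⟩
      have hcast : ((k.toNat : ℕ) : ℝ) = (k : ℝ) := by
        exact_mod_cast congrArg (Int.cast : ℤ → ℝ) (Int.toNat_of_nonneg hknn)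
      have hpow : ((-1:ℝ)) ^ (k.toNat) = (-1:ℝ)^k := by
        rw [← zpow_natCast]
        congr 1
        exact Int.toNat_of_nonneg hknn
      rw [hcast, hpow]
      exact hk'
    · rintro ⟨n, hn⟩
      apply hA.2
      refine ⟨(n:ℤ), ?_⟩
      apply (hB (n:ℤ)).2
      have hcast : (((n:ℤ)):ℝ) = (n:ℝ) := by push_cast; rfl
      have hpow : (-1:ℝ)^((n:ℤ)) = (-1:ℝ)^n := zpow_natCast _ _
      rw [hcast, hpow]
      exact hn
end

section
/- Let n ∈ ℕ₀ and let Hₙ denote the physicists' Hermite polynomial, Hₙ(t) = (−1)ⁿ·e^{t²}·(dⁿ/dtⁿ)(e^{−t²}). Then x(t) = e^{−t²/2}·Hₙ(t) is a nonzero solution of x''(t) = (t² − (2n+1))·x(t), x lies in L²(ℝ), and its derivative satisfies x'(t) = e^{−t²/2}·(2n·H_{n−1}(t) − t·Hₙ(t)) (with the convention H_{−1} = 0). -/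
/-!
Differentiating `p(t) e^{q(t)}` for polynomials `p, q` gives `(p' + q' p)(t) e^{q(t)}`. Iterating
this on `e^{-t²}` identifies `Hₙ` with the polynomial given by `H₀ = 1`, `Hₙ₊₁ = 2X Hₙ - Hₙ'`, from
which `Hₙ' = 2n Hₙ₋₁` and Hermite's equation `Hₙ'' = 2X Hₙ' - 2n Hₙ` follow. Against the weight
`e^{-t²/2}`, differentiation acts on polynomials as `p ↦ p' - X p`; applied twice to `Hₙ` it gives
`(X² - (2n+1)) Hₙ` by Hermite's equation. The leading coefficient `2ⁿ` makes the function nonzero,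
and a polynomial times a Gaussian is square integrable.
-/

open MeasureTheory

/-- The physicists' Hermite polynomial (as a function):
`Hₙ(t) = (-1)ⁿ e^{t²} (dⁿ/dtⁿ)(e^{-t²})`. -/
noncomputable def physHermite (n : ℕ) (t : ℝ) : ℝ :=
  (-1 : ℝ) ^ n * Real.exp (t ^ 2) * iteratedDeriv n (fun s : ℝ => Real.exp (-s ^ 2)) t


open Polynomial

noncomputable def evalMulExp (p q : ℝ[X]) (t : ℝ) : ℝ :=
  p.eval t * Real.exp (q.eval t)

theorem hasDerivAt_evalMulExp (p q : ℝ[X]) (t : ℝ) :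
    HasDerivAt (evalMulExp p q) (evalMulExp (derivative p + derivative q * p) q t) t := by
  have h := (p.hasDerivAt t).mul (q.hasDerivAt t).exp
  refine h.congr_deriv ?_
  simp only [evalMulExp, eval_add, eval_mul]
  ring

theorem deriv_evalMulExp (p q : ℝ[X]) :
    deriv (evalMulExp p q) = evalMulExp (derivative p + derivative q * p) q :=
  funext fun t => (hasDerivAt_evalMulExp p q t).deriv

theorem evalMulExp_eq_zero_iff (p q : ℝ[X]) : evalMulExp p q = 0 ↔ p = 0 := by
  refine ⟨fun h => Polynomial.funext fun t => ?_, fun h => by ext t; simp [evalMulExp, h]⟩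
  have := congrFun h t
  simp only [evalMulExp, Pi.zero_apply, mul_eq_zero, Real.exp_ne_zero, or_false] at this
  simpa using this

theorem integrable_eval_mul_exp_neg_mul_sq (p : ℝ[X]) {b : ℝ} (hb : 0 < b) :
    Integrable fun x : ℝ => p.eval x * Real.exp (-b * x ^ 2) := by
  induction p using Polynomial.induction_on' with
  | add p q hp hq => simp only [eval_add, add_mul]; exact hp.add hq
  | monomial k a =>
    have h := (integrable_rpow_mul_exp_neg_mul_sq hb
      (lt_of_lt_of_le neg_one_lt_zero (Nat.cast_nonneg k))).const_mul a
    simpa only [eval_monomial, Real.rpow_natCast, mul_assoc] using h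

noncomputable def physHermitePoly : ℕ → ℝ[X]
  | 0 => 1
  | n + 1 => 2 * X * physHermitePoly n - derivative (physHermitePoly n)

theorem physHermitePoly_succ (n : ℕ) :
    physHermitePoly (n + 1) = 2 * X * physHermitePoly n - derivative (physHermitePoly n) :=
  rfl

theorem iteratedDeriv_exp_neg_sq (n : ℕ) :
    iteratedDeriv n (fun s : ℝ => Real.exp (-s ^ 2)) =
      evalMulExp ((-1) ^ n * physHermitePoly n) (-X ^ 2) := by
  induction n with
  | zero => ext t; simp [evalMulExp, physHermitePoly]
  | succ n ih =>
    rw [iteratedDeriv_succ, ih, deriv_evalMulExp, physHermitePoly_succ]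
    congr 1
    simp only [derivative_mul, derivative_neg, derivative_pow, derivative_one, derivative_X,
      neg_zero, mul_zero, zero_mul, Nat.cast_ofNat, C_ofNat]
    ring

theorem physHermite_eq_eval (n : ℕ) (t : ℝ) : physHermite n t = (physHermitePoly n).eval t := by
  rw [physHermite, iteratedDeriv_exp_neg_sq, evalMulExp]
  simp only [eval_mul, eval_pow, eval_neg, eval_one, eval_X]
  have hexp : Real.exp (t ^ 2) * Real.exp (-t ^ 2) = 1 := by rw [← Real.exp_add]; simp
  have hsign : ((-1 : ℝ) ^ n) ^ 2 = 1 := by rw [← pow_mul, pow_mul', neg_one_sq, one_pow]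
  linear_combination ((-1 : ℝ) ^ n) ^ 2 * (physHermitePoly n).eval t * hexp +
    (physHermitePoly n).eval t * hsign

theorem derivative_physHermitePoly_succ (n : ℕ) :
    derivative (physHermitePoly (n + 1)) = 2 * (n + 1 : ℝ[X]) * physHermitePoly n := by
  induction n with
  | zero => simp [physHermitePoly]
  | succ n ih =>
    simp only [physHermitePoly_succ (n + 1), derivative_sub, derivative_mul, derivative_X,
      derivative_ofNat, ih, derivative_add, derivative_natCast, derivative_one]
    rw [physHermitePoly_succ n]
    push_cast
    ring

theorem derivative_physHermitePoly (n : ℕ) :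
    derivative (physHermitePoly n) = 2 * (n : ℝ[X]) * physHermitePoly (n - 1) := by
  cases n with
  | zero => simp [physHermitePoly]
  | succ n => simpa using derivative_physHermitePoly_succ n

theorem derivative_derivative_physHermitePoly (n : ℕ) :
    derivative (derivative (physHermitePoly n)) =
      2 * X * derivative (physHermitePoly n) - 2 * (n : ℝ[X]) * physHermitePoly n := by
  cases n with
  | zero => simp [physHermitePoly]
  | succ n =>
    rw [derivative_physHermitePoly_succ, derivative_mul, physHermitePoly_succ]
    simp only [derivative_mul, derivative_ofNat, derivative_add, derivative_natCast,
      derivative_one]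
    push_cast
    ring

theorem natDegree_physHermitePoly_le (n : ℕ) : (physHermitePoly n).natDegree ≤ n := by
  induction n with
  | zero => simp [physHermitePoly]
  | succ n ih =>
    rw [physHermitePoly_succ]
    refine (natDegree_sub_le _ _).trans (max_le ?_ ((natDegree_derivative_le _).trans (by omega)))
    refine natDegree_mul_le.trans ?_
    have : (2 * X : ℝ[X]).natDegree ≤ 1 := natDegree_mul_le.trans (by simp)
    omega

theorem coeff_physHermitePoly_self (n : ℕ) : (physHermitePoly n).coeff n = 2 ^ n := by
  induction n with
  | zero => simp [physHermitePoly]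
  | succ n ih =>
    have hlt : (derivative (physHermitePoly n)).natDegree < n + 1 :=
      (natDegree_derivative_le _).trans_lt (by have := natDegree_physHermitePoly_le n; omega)
    rw [physHermitePoly_succ, coeff_sub, mul_assoc, ← C_ofNat, coeff_C_mul, coeff_X_mul, ih,
      coeff_eq_zero_of_natDegree_lt hlt]
    ring

theorem physHermitePoly_ne_zero (n : ℕ) : physHermitePoly n ≠ 0 := fun h => by
  have := coeff_physHermitePoly_self n
  rw [h, coeff_zero] at this
  exact pow_ne_zero n two_ne_zero this.symm

theorem evalMulExp_mul (p r q : ℝ[X]) (t : ℝ) :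
    evalMulExp (p * r) q t = p.eval t * evalMulExp r q t := by
  simp only [evalMulExp, eval_mul, mul_assoc]

theorem deriv_evalMulExp_neg_half_sq (p : ℝ[X]) :
    deriv (evalMulExp p (-C 2⁻¹ * X ^ 2)) =
      evalMulExp (derivative p - X * p) (-C 2⁻¹ * X ^ 2) := by
  have hq : derivative (-C 2⁻¹ * X ^ 2 : ℝ[X]) = -X := by
    rw [neg_mul, derivative_neg, derivative_C_mul_X_pow]
    norm_num
  rw [deriv_evalMulExp, hq, neg_mul, ← sub_eq_add_neg]

theorem memLp_two_evalMulExp_neg_mul_sq (p : ℝ[X]) {b : ℝ} (hb : 0 < b) :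
    MemLp (evalMulExp p (-C b * X ^ 2)) 2 := by
  have hcont : Continuous (evalMulExp p (-C b * X ^ 2)) :=
    p.continuous.mul (Polynomial.continuous _).rexp
  rw [memLp_two_iff_integrable_sq hcont.aestronglyMeasurable]
  refine (integrable_eval_mul_exp_neg_mul_sq (p ^ 2) (mul_pos two_pos hb)).congr
    (.of_forall fun x => ?_)
  simp only [evalMulExp, eval_pow, eval_mul, eval_neg, eval_C, eval_X, mul_pow, ← Real.exp_nat_mul]
  ring_nf

theorem physHermitePoly_weber (n : ℕ) :
    derivative (derivative (physHermitePoly n) - X * physHermitePoly n) -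
        X * (derivative (physHermitePoly n) - X * physHermitePoly n) =
      (X ^ 2 - (2 * (n : ℝ[X]) + 1)) * physHermitePoly n := by
  simp only [derivative_sub, derivative_mul, derivative_X, one_mul,
    derivative_derivative_physHermitePoly]
  ring

theorem exp_neg_sq_div_two_mul_physHermite (n : ℕ) :
    (fun t : ℝ => Real.exp (-t ^ 2 / 2) * physHermite n t) =
      evalMulExp (physHermitePoly n) (-C 2⁻¹ * X ^ 2) := by
  ext t
  simp only [evalMulExp, physHermite_eq_eval, eval_mul, eval_neg, eval_C, eval_pow, eval_X]
  ring_nf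

/-- For each `n ∈ ℕ₀`, `x(t) = e^{-t²/2} Hₙ(t)` is a nonzero
`L²(ℝ)` solution of the Weber equation `x'' = (t² - (2n+1)) x`, with derivative
`x'(t) = e^{-t²/2} (2n H_{n-1}(t) - t Hₙ(t))` (convention `H₋₁ = 0`, here
harmless since the factor `2n` vanishes when `n = 0`). -/
theorem stmt15 (n : ℕ) :
    (fun t : ℝ => Real.exp (-t ^ 2 / 2) * physHermite n t) ≠ 0 ∧
    (∀ t : ℝ,
      deriv (deriv fun t : ℝ => Real.exp (-t ^ 2 / 2) * physHermite n t) t =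
        (t ^ 2 - (2 * (n : ℝ) + 1)) * (Real.exp (-t ^ 2 / 2) * physHermite n t)) ∧
    MeasureTheory.MemLp (fun t : ℝ => Real.exp (-t ^ 2 / 2) * physHermite n t) 2
      MeasureTheory.volume ∧
    (∀ t : ℝ,
      deriv (fun t : ℝ => Real.exp (-t ^ 2 / 2) * physHermite n t) t =
        Real.exp (-t ^ 2 / 2) *
          (2 * (n : ℝ) * physHermite (n - 1) t - t * physHermite n t)) := by
  have hψ := exp_neg_sq_div_two_mul_physHermite n
  refine ⟨?_, fun t => ?_, ?_, fun t => ?_⟩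
  · rw [hψ]
    exact (evalMulExp_eq_zero_iff _ _).not.mpr (physHermitePoly_ne_zero n)
  · rw [hψ, deriv_evalMulExp_neg_half_sq, deriv_evalMulExp_neg_half_sq, physHermitePoly_weber,
      evalMulExp_mul, ← congrFun hψ t]
    simp only [eval_sub, eval_add, eval_mul, eval_pow, eval_X, eval_ofNat, eval_natCast, eval_one]
  · rw [hψ]
    exact memLp_two_evalMulExp_neg_mul_sq _ (by norm_num)
  · rw [hψ, deriv_evalMulExp_neg_half_sq, derivative_physHermitePoly]
    simp only [evalMulExp, physHermite_eq_eval, eval_sub, eval_mul, eval_ofNat, eval_natCast,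
      eval_X, eval_neg, eval_C, eval_pow]
    ring_nf
end

section
/- Let ξ₀ > 0, r₂₀ > 0, let g : [0, r₂₀] → ℝ be C^∞-smooth with g(0) = 1/2, and let φ₂, ρ₂ : [0, ξ₀^{1/3}) × [0, r₂₀] → ℝ be C^∞-smooth. Define Δ₂(ξ, r₂) = sin(π·g(r₂)/ξ − π/2 + ξ^{2/3}·φ₂(ξ^{1/3}, r₂)) + ξ^{2/3}·ρ₂(ξ^{1/3}, r₂), and assume that for ξ ∈ (0, ξ₀): Δ₂(ξ, 0) = 0 if and only if ξ = (2m+1)^{−1} for some m ∈ ℕ₀. Then, after possibly shrinking ξ₀ and r₂₀, there exist C^∞-smooth functions J̄₂(·,·,+1), J̄₂(·,·,−1) : [0, ξ₀^{1/3}) × [0, r₂₀] → ℝ with J̄₂((2m+1)^{−1/3}, 0, (−1)^m) = 0 for all m ∈ ℕ₀ with (2m+1)^{−1} ≤ ξ₀, such that for ξ ∈ (0, ξ₀) and r₂ ∈ [0, r₂₀]: Δ₂(ξ, r₂) = 0 if and only if there is an n ∈ ℕ with g(r₂) = (n + 1/2)·ξ + ξ^{5/3}·J̄₂(ξ^{1/3},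 r₂, (−1)ⁿ). -/
open Set

section AuxForStmt17

open Real

lemma analyticAt_real_sin (u : ℝ) : AnalyticAt ℝ Real.sin u := by
  have h1 : AnalyticAt ℝ Complex.sin (u : ℂ) :=
    (Complex.differentiable_sin.analyticAt (u : ℂ)).restrictScalars
  have h2 : AnalyticAt ℝ (fun x : ℝ => (x : ℂ)) u := Complex.ofRealCLM.analyticAt u
  have h3 : AnalyticAt ℝ (fun x : ℝ => (Complex.sin x).re) u :=
    (Complex.reCLM.analyticAt _).comp (h1.comp h2)
  exact h3.congr (Filter.Eventually.of_forall fun x => (Complex.sin_ofReal_re x))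

noncomputable def Sfun : ℝ → ℝ := dslope Real.sin 0

lemma Sfun_zero : Sfun 0 = 1 := by
  simp [Sfun, dslope_same, Real.deriv_sin]

lemma Sfun_of_ne {t : ℝ} (ht : t ≠ 0) : Sfun t = Real.sin t / t := by
  rw [Sfun, dslope_of_ne _ ht, slope_def_field]
  simp

lemma contDiffAt_Sfun (u : ℝ) : ContDiffAt ℝ (⊤ : ℕ∞) Sfun u := by
  rcases eq_or_ne u 0 with rfl | hu
  · obtain ⟨p, hp⟩ := analyticAt_real_sin 0
    exact hp.has_fpower_series_dslope_fslope.analyticAt.contDiffAt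
  · have h : ContDiffAt ℝ (⊤ : ℕ∞) (fun v : ℝ => Real.sin v / v) u :=
      ((analyticAt_real_sin u).contDiffAt).div contDiffAt_id hu
    refine h.congr_of_eventuallyEq ?_
    filter_upwards [isOpen_ne.mem_nhds hu] with v hv
    exact Sfun_of_ne hv

noncomputable def Afun : ℝ → ℝ := fun t => (Sfun (Real.arcsin t))⁻¹

lemma Afun_zero : Afun 0 = 1 := by
  simp [Afun, Real.arcsin_zero, Sfun_zero]

lemma Sfun_arcsin {t : ℝ} (h1 : -1 ≤ t) (h2 : t ≤ 1) (h0 : t ≠ 0) :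
    Sfun (Real.arcsin t) = t / Real.arcsin t := by
  have ha : Real.arcsin t ≠ 0 := fun h => h0 (Real.arcsin_eq_zero_iff.mp h)
  rw [Sfun_of_ne ha, Real.sin_arcsin h1 h2]

lemma Afun_eq {t : ℝ} (h1 : -1 ≤ t) (h2 : t ≤ 1) (h0 : t ≠ 0) :
    Afun t = Real.arcsin t / t := by
  rw [Afun, Sfun_arcsin h1 h2 h0, inv_div]

lemma arcsin_eq_mul_Afun {t : ℝ} (h1 : -1 ≤ t) (h2 : t ≤ 1) :
    Real.arcsin t = t * Afun t := by
  rcases eq_or_ne t 0 with rfl | h0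
  · simp [Real.arcsin_zero]
  · rw [Afun_eq h1 h2 h0]
    field_simp

lemma Sfun_arcsin_ne {t : ℝ} (h1 : -1 ≤ t) (h2 : t ≤ 1) :
    Sfun (Real.arcsin t) ≠ 0 := by
  rcases eq_or_ne t 0 with rfl | h0
  · rw [Real.arcsin_zero, Sfun_zero]; norm_num
  · have ha : Real.arcsin t ≠ 0 := fun h => h0 (Real.arcsin_eq_zero_iff.mp h)
    rw [Sfun_arcsin h1 h2 h0]
    exact div_ne_zero h0 ha

lemma contDiffAt_Afun {t : ℝ} (h1 : -1 < t) (h2 : t < 1) :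
    ContDiffAt ℝ (⊤ : ℕ∞) Afun t := by
  have harc : ContDiffAt ℝ (⊤ : ℕ∞) Real.arcsin t := Real.contDiffAt_arcsin h1.ne' h2.ne
  exact ((contDiffAt_Sfun (Real.arcsin t)).comp t harc).inv (Sfun_arcsin_ne h1.le h2.le)

lemma contDiffOn_Afun : ContDiffOn ℝ (⊤ : ℕ∞) Afun (Ioo (-1 : ℝ) 1) :=
  fun _ ht => (contDiffAt_Afun ht.1 ht.2).contDiffWithinAt

lemma arcsin_le_two_mul {t : ℝ} (h0 : 0 < t) (h : t ≤ 1/2) : Real.arcsin t ≤ 2 * t := by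
  have hpi : (2 : ℝ) * t ≤ π / 2 := by
    nlinarith [Real.pi_gt_three]
  have ht2 : 2 * t^2 ≤ 1 := by nlinarith
  have hsin : t ≤ Real.sin (2 * t) := by
    nlinarith [Real.sin_gt_sub_cube (by linarith : (0:ℝ) < 2*t),
      mul_nonneg h0.le (by linarith : (0:ℝ) ≤ 1 - 2*t^2)]
  exact (Real.arcsin_le_iff_le_sin ⟨by linarith, by linarith⟩
    ⟨by nlinarith [Real.pi_gt_three], hpi⟩).mpr hsin

lemma abs_arcsin_le {t : ℝ} (h : |t| ≤ 1/2) : |Real.arcsin t| ≤ 2 * |t| := by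
  rcases lt_trichotomy t 0 with hlt | rfl | hgt
  · have h' : |(-t)| ≤ 1/2 := by rwa [abs_neg]
    have := arcsin_le_two_mul (by linarith : (0:ℝ) < -t)
      (by rw [abs_of_pos (by linarith : (0:ℝ) < -t)] at h'; linarith)
    have hnn : 0 ≤ Real.arcsin (-t) := Real.arcsin_nonneg.mpr (by linarith)
    rw [Real.arcsin_neg] at this hnn
    rw [abs_of_nonpos (by linarith), abs_of_neg hlt]
    linarith
  · simp
  · have := arcsin_le_two_mul hgt (by rwa [abs_of_pos hgt] at h)
    have hnn : 0 ≤ Real.arcsin t := Real.arcsin_nonneg.mpr hgt.le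
    rw [abs_of_nonneg hnn, abs_of_pos hgt]
    linarith

lemma abs_Afun_le {t : ℝ} (h : |t| ≤ 1/2) : |Afun t| ≤ 2 := by
  rcases eq_or_ne t 0 with rfl | h0
  · rw [Afun_zero]; norm_num
  · have h1 : -1 ≤ t := by cases abs_le.mp h; linarith
    have h2 : t ≤ 1 := by cases abs_le.mp h; linarith
    rw [Afun_eq h1 h2 h0, abs_div]
    rw [div_le_iff₀ (abs_pos.mpr h0)]
    have := abs_arcsin_le h
    linarith

lemma theta_iff (x gr P R c σ : ℝ) (hx : x ≠ 0) (hy1 : -1 ≤ x^2*R) (hy2 : x^2*R ≤ 1) :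
    (π * gr / x^3 - π/2 + x^2*P = c*π + σ * Real.arcsin (-(x^2*R)) ↔
    gr = (c + 1/2)*x^3 + x^5 * (-(P + σ * (R * Afun (x^2*R)))/π)) := by
  have hπ : (π : ℝ) ≠ 0 := Real.pi_ne_zero
  have hx3 : x^3 ≠ 0 := pow_ne_zero 3 hx
  rw [Real.arcsin_neg, arcsin_eq_mul_Afun hy1 hy2]
  have hlhs : π * gr / x^3 - π/2 + x^2*P = (π*gr - (π/2)*x^3 + x^5*P)/x^3 := by
    field_simp
  have hrhs : (c + 1/2)*x^3 + x^5 * (-(P + σ * (R * Afun (x^2*R)))/π)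
      = ((c + 1/2)*x^3*π + x^5 * (-(P + σ * (R * Afun (x^2*R)))))/π := by
    field_simp
  rw [hlhs, hrhs, div_eq_iff hx3, eq_div_iff hπ]
  constructor <;> intro h <;> linear_combination h

end AuxForStmt17

set_option maxHeartbeats 2000000 in
/-- Solving the intermediate-regime bifurcation equation:
with `g` smooth, `g(0) = 1/2`, `φ₂, ρ₂` smooth, and
`Δ₂(ξ, r₂) = sin(π g(r₂)/ξ - π/2 + ξ^{2/3} φ₂(ξ^{1/3}, r₂)) + ξ^{2/3} ρ₂(ξ^{1/3}, r₂)`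
whose zeros at `r₂ = 0` are exactly `ξ = (2m+1)⁻¹`, after shrinking `ξ₀`, `r₂₀`
there are smooth `J̄₂(·,·,±1)` vanishing at `((2m+1)^{-1/3}, 0)` such that
`Δ₂(ξ, r₂) = 0` iff `g(r₂) = (n + 1/2) ξ + ξ^{5/3} J̄₂(ξ^{1/3}, r₂, (-1)ⁿ)`
for some `n ∈ ℕ`. -/
theorem stmt17 (ξ₀ r₂₀ : ℝ) (hξ₀ : 0 < ξ₀) (hr₂₀ : 0 < r₂₀)
    (g : ℝ → ℝ) (hg : ContDiffOn ℝ (⊤ : ℕ∞) g (Icc 0 r₂₀)) (hg0 : g 0 = 1/2)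
    (φ₂ ρ₂ : ℝ → ℝ → ℝ)
    (hφ₂ : ContDiffOn ℝ (⊤ : ℕ∞) (fun p : ℝ × ℝ => φ₂ p.1 p.2)
      (Ico 0 (ξ₀ ^ ((1 : ℝ)/3)) ×ˢ Icc 0 r₂₀))
    (hρ₂ : ContDiffOn ℝ (⊤ : ℕ∞) (fun p : ℝ × ℝ => ρ₂ p.1 p.2)
      (Ico 0 (ξ₀ ^ ((1 : ℝ)/3)) ×ˢ Icc 0 r₂₀))
    (hΔ₂zeros : ∀ ξ : ℝ, ξ ∈ Ioo 0 ξ₀ →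
      (Real.sin (Real.pi * g 0 / ξ - Real.pi / 2 +
          ξ ^ ((2 : ℝ)/3) * φ₂ (ξ ^ ((1 : ℝ)/3)) 0) +
        ξ ^ ((2 : ℝ)/3) * ρ₂ (ξ ^ ((1 : ℝ)/3)) 0 = 0 ↔
        ∃ m : ℕ, ξ = (2 * (m : ℝ) + 1)⁻¹)) :
    ∃ ξ₁ r₂₁ : ℝ, 0 < ξ₁ ∧ ξ₁ ≤ ξ₀ ∧ 0 < r₂₁ ∧ r₂₁ ≤ r₂₀ ∧
      ∃ Jbar₂ : ℝ → ℝ → ℝ → ℝ,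
        (∀ σ ∈ ({1, -1} : Set ℝ),
          ContDiffOn ℝ (⊤ : ℕ∞) (fun p : ℝ × ℝ => Jbar₂ p.1 p.2 σ)
            (Ico 0 (ξ₁ ^ ((1 : ℝ)/3)) ×ˢ Icc 0 r₂₁)) ∧
        (∀ m : ℕ, (2 * (m : ℝ) + 1)⁻¹ ≤ ξ₁ →
          Jbar₂ ((2 * (m : ℝ) + 1) ^ (-(1 : ℝ)/3)) 0 ((-1 : ℝ) ^ m) = 0) ∧
        ∀ ξ : ℝ, ξ ∈ Ioo 0 ξ₁ → ∀ r₂ : ℝ, r₂ ∈ Icc 0 r₂₁ →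
          (Real.sin (Real.pi * g r₂ / ξ - Real.pi / 2 +
              ξ ^ ((2 : ℝ)/3) * φ₂ (ξ ^ ((1 : ℝ)/3)) r₂) +
            ξ ^ ((2 : ℝ)/3) * ρ₂ (ξ ^ ((1 : ℝ)/3)) r₂ = 0 ↔
          ∃ n : ℕ,
            g r₂ = ((n : ℝ) + 1/2) * ξ +
              ξ ^ ((5 : ℝ)/3) * Jbar₂ (ξ ^ ((1 : ℝ)/3)) r₂ ((-1 : ℝ) ^ n)) := by
  have hπ : (Real.pi : ℝ) ≠ 0 := Real.pi_ne_zero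
  -- bounds on φ₂, ρ₂ on a compact set
  set a : ℝ := ξ₀ ^ ((1:ℝ)/3) / 2 with ha
  have hξ₀13 : 0 < ξ₀ ^ ((1:ℝ)/3) := Real.rpow_pos_of_pos hξ₀ _
  have haK : Icc 0 a ×ˢ Icc 0 r₂₀ ⊆ Ico 0 (ξ₀ ^ ((1:ℝ)/3)) ×ˢ Icc 0 r₂₀ := by
    intro p hp
    exact ⟨⟨hp.1.1, lt_of_le_of_lt hp.1.2 (by rw [ha]; linarith)⟩, hp.2⟩
  have hK : IsCompact (Icc (0:ℝ) a ×ˢ Icc (0:ℝ) r₂₀) := isCompact_Icc.prod isCompact_Icc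
  obtain ⟨M₁, hM₁⟩ := hK.exists_bound_of_continuousOn ((hφ₂.continuousOn).mono haK)
  obtain ⟨M₂, hM₂⟩ := hK.exists_bound_of_continuousOn ((hρ₂.continuousOn).mono haK)
  set M : ℝ := max (max M₁ M₂) 1 with hM
  have hM1 : (1:ℝ) ≤ M := le_max_right _ 1
  have hM0 : (0:ℝ) < M := by linarith
  have hφM : ∀ x r : ℝ, x ∈ Icc 0 a → r ∈ Icc 0 r₂₀ → |φ₂ x r| ≤ M := by
    intro x r hx hr
    have := hM₁ (x, r) ⟨hx, hr⟩
    rw [Real.norm_eq_abs] at this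
    calc |φ₂ x r| ≤ M₁ := this
    _ ≤ M := le_trans (le_max_left _ _) (le_max_left _ _)
  have hρM : ∀ x r : ℝ, x ∈ Icc 0 a → r ∈ Icc 0 r₂₀ → |ρ₂ x r| ≤ M := by
    intro x r hx hr
    have := hM₂ (x, r) ⟨hx, hr⟩
    rw [Real.norm_eq_abs] at this
    calc |ρ₂ x r| ≤ M₂ := this
    _ ≤ M := le_trans (le_max_right _ _) (le_max_left _ _)
  -- choice of r₂₁
  have hgc : ContinuousWithinAt g (Icc 0 r₂₀) 0 :=
    (hg.continuousOn) 0 ⟨le_refl (0:ℝ), hr₂₀.le⟩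
  rw [Metric.continuousWithinAt_iff] at hgc
  obtain ⟨δ, hδ0, hδ⟩ := hgc (1/4) (by norm_num)
  set r₂₁ : ℝ := min r₂₀ (δ/2) with hr₂₁def
  have hr₂₁0 : 0 < r₂₁ := lt_min hr₂₀ (by linarith)
  have hr₂₁le : r₂₁ ≤ r₂₀ := min_le_left _ _
  have hglb : ∀ r ∈ Icc (0:ℝ) r₂₁, 1/4 ≤ g r := by
    intro r hr
    have hmem : r ∈ Icc (0:ℝ) r₂₀ := ⟨hr.1, hr.2.trans hr₂₁le⟩
    have hrd : r ≤ δ/2 := le_trans hr.2 (min_le_right _ _)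
    have hd : dist r 0 < δ := by
      rw [Real.dist_eq, sub_zero, abs_of_nonneg hr.1]; linarith
    have h4 := hδ hmem hd
    rw [Real.dist_eq, hg0] at h4
    rcases abs_lt.mp h4 with ⟨h5, _⟩
    linarith
  -- choice of ξ₁
  set c : ℝ := 1/(8*M) with hc
  have hc0 : 0 < c := by positivity
  have hc1 : c ≤ 1 := by rw [hc]; rw [div_le_one (by linarith)]; linarith
  set ξ₁ : ℝ := min (ξ₀/8) (c^3) with hξ₁def
  have hξ₁0 : 0 < ξ₁ := lt_min (by linarith) (by positivity)
  have hξ₁lt : ξ₁ < ξ₀ := lt_of_le_of_lt (min_le_left _ _) (by linarith)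
  have hξ₁ξ₀ : ξ₁ ≤ ξ₀ := hξ₁lt.le
  have hξ₁23 : ξ₁ ^ ((2:ℝ)/3) ≤ c := by
    calc ξ₁ ^ ((2:ℝ)/3) ≤ (c^3) ^ ((2:ℝ)/3) :=
          Real.rpow_le_rpow hξ₁0.le (min_le_right _ _) (by norm_num)
    _ = c^2 := by
          rw [← Real.rpow_natCast c 3, ← Real.rpow_mul hc0.le, ← Real.rpow_natCast c 2]
          norm_num
    _ ≤ c := by nlinarith
  have h8 : ((8:ℝ)) ^ ((1:ℝ)/3) = 2 := by
    rw [show (8:ℝ) = 2^(3:ℕ) by norm_num, ← Real.rpow_natCast 2 3,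
      ← Real.rpow_mul (by norm_num : (0:ℝ) ≤ 2)]
    norm_num
  have hξ₁13 : ξ₁ ^ ((1:ℝ)/3) ≤ a := by
    calc ξ₁ ^ ((1:ℝ)/3) ≤ (ξ₀/8) ^ ((1:ℝ)/3) :=
          Real.rpow_le_rpow hξ₁0.le (min_le_left _ _) (by norm_num)
    _ = a := by
          rw [Real.div_rpow hξ₀.le (by norm_num), h8, ha]
  have hξ₁13pos : 0 < ξ₁ ^ ((1:ℝ)/3) := Real.rpow_pos_of_pos hξ₁0 _
  -- the bifurcation function
  set Jb : ℝ → ℝ → ℝ → ℝ :=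
    fun u v σ => -(φ₂ u v + σ * (ρ₂ u v * Afun (u^2 * ρ₂ u v))) / Real.pi with hJbdef
  -- basic estimates
  have hx2le : ∀ x : ℝ, x ∈ Icc 0 (ξ₁ ^ ((1:ℝ)/3)) → x^2 ≤ c := by
    intro x hx
    calc x^2 ≤ (ξ₁ ^ ((1:ℝ)/3))^2 := by nlinarith [hx.1, hx.2]
    _ = ξ₁ ^ ((2:ℝ)/3) := by
        rw [← Real.rpow_natCast (ξ₁ ^ ((1:ℝ)/3)) 2, ← Real.rpow_mul hξ₁0.le]
        norm_num
    _ ≤ c := hξ₁23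
  have hyB : ∀ x r : ℝ, x ∈ Icc 0 (ξ₁ ^ ((1:ℝ)/3)) → r ∈ Icc 0 r₂₁ →
      |x^2 * ρ₂ x r| ≤ 1/8 := by
    intro x r hx hr
    have hxa : x ∈ Icc 0 a := ⟨hx.1, hx.2.trans hξ₁13⟩
    have hrb : r ∈ Icc 0 r₂₀ := ⟨hr.1, hr.2.trans hr₂₁le⟩
    have h1 : |x^2 * ρ₂ x r| = x^2 * |ρ₂ x r| := by
      rw [abs_mul, abs_of_nonneg (sq_nonneg x)]
    rw [h1]
    have h2 : x^2 * |ρ₂ x r| ≤ c * M := by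
      have := hρM x r hxa hrb
      have h3 := hx2le x hx
      nlinarith [abs_nonneg (ρ₂ x r), sq_nonneg x]
    have h4 : c * M = 1/8 := by rw [hc]; field_simp
    linarith
  have hJbB : ∀ x r σ : ℝ, x ∈ Icc 0 (ξ₁ ^ ((1:ℝ)/3)) → r ∈ Icc 0 r₂₁ → |σ| ≤ 1 →
      |Jb x r σ| ≤ M := by
    intro x r σ hx hr hσ
    have hxa : x ∈ Icc 0 a := ⟨hx.1, hx.2.trans hξ₁13⟩
    have hrb : r ∈ Icc 0 r₂₀ := ⟨hr.1, hr.2.trans hr₂₁le⟩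
    have hP := hφM x r hxa hrb
    have hR := hρM x r hxa hrb
    have hy := hyB x r hx hr
    have hA : |Afun (x^2 * ρ₂ x r)| ≤ 2 := abs_Afun_le (by linarith)
    have hnum : |φ₂ x r + σ * (ρ₂ x r * Afun (x^2 * ρ₂ x r))| ≤ 3 * M := by
      have h1 : |σ * (ρ₂ x r * Afun (x^2 * ρ₂ x r))| ≤ 2 * M := by
        rw [abs_mul, abs_mul]
        have t1 : |ρ₂ x r| * |Afun (x^2 * ρ₂ x r)| ≤ M * 2 :=
          mul_le_mul hR hA (abs_nonneg _) hM0.le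
        have t2 : |σ| * (|ρ₂ x r| * |Afun (x^2 * ρ₂ x r)|) ≤ 1 * (M * 2) :=
          mul_le_mul hσ t1 (by positivity) (by norm_num)
        linarith
      calc |φ₂ x r + σ * (ρ₂ x r * Afun (x^2 * ρ₂ x r))|
          ≤ |φ₂ x r| + |σ * (ρ₂ x r * Afun (x^2 * ρ₂ x r))| := abs_add_le _ _
      _ ≤ 3 * M := by linarith
    simp only [hJbdef]
    rw [abs_div, abs_neg, abs_of_pos Real.pi_pos]
    rw [div_le_iff₀ Real.pi_pos]
    have hπ3 : (3:ℝ) ≤ Real.pi := Real.pi_gt_three.le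
    have := mul_le_mul_of_nonneg_left hπ3 hM0.le
    linarith
  -- the key equivalence, valid on Ioc 0 ξ₁
  have key : ∀ ξ : ℝ, 0 < ξ → ξ ≤ ξ₁ → ∀ r ∈ Icc (0:ℝ) r₂₁,
      (Real.sin (Real.pi * g r / ξ - Real.pi / 2 +
          ξ ^ ((2 : ℝ)/3) * φ₂ (ξ ^ ((1 : ℝ)/3)) r) +
        ξ ^ ((2 : ℝ)/3) * ρ₂ (ξ ^ ((1 : ℝ)/3)) r = 0 ↔
      ∃ n : ℕ, g r = ((n : ℝ) + 1/2) * ξ +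
          ξ ^ ((5 : ℝ)/3) * Jb (ξ ^ ((1 : ℝ)/3)) r ((-1 : ℝ) ^ n)) := by
    intro ξ hξ0 hξle r hr
    set x : ℝ := ξ ^ ((1:ℝ)/3) with hxdef
    have hx0 : 0 < x := Real.rpow_pos_of_pos hξ0 _
    have hx3 : x^3 = ξ := by
      rw [hxdef, ← Real.rpow_natCast (ξ ^ ((1:ℝ)/3)) 3, ← Real.rpow_mul hξ0.le]
      norm_num
    have h23 : ξ ^ ((2:ℝ)/3) = x^2 := by
      rw [hxdef, ← Real.rpow_natCast (ξ ^ ((1:ℝ)/3)) 2, ← Real.rpow_mul hξ0.le]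
      norm_num
    have h53 : ξ ^ ((5:ℝ)/3) = x^5 := by
      rw [hxdef, ← Real.rpow_natCast (ξ ^ ((1:ℝ)/3)) 5, ← Real.rpow_mul hξ0.le]
      norm_num
    have hxmem : x ∈ Icc 0 (ξ₁ ^ ((1:ℝ)/3)) :=
      ⟨hx0.le, Real.rpow_le_rpow hξ0.le hξle (by norm_num)⟩
    have hgr : 1/4 ≤ g r := hglb r hr
    have hy : |x^2 * ρ₂ x r| ≤ 1/8 := hyB x r hxmem hr
    have hy1 : -1 ≤ x^2 * ρ₂ x r := by
      rcases abs_le.mp hy with ⟨h5, _⟩; linarith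
    have hy2 : x^2 * ρ₂ x r ≤ 1 := by
      rcases abs_le.mp hy with ⟨_, h5⟩; linarith
    have harc : Real.sin (Real.arcsin (-(x^2 * ρ₂ x r))) = -(x^2 * ρ₂ x r) :=
      Real.sin_arcsin (by linarith) (by linarith)
    have hx5b : ∀ σ : ℝ, |σ| ≤ 1 → |x^5 * Jb x r σ| ≤ x^3 / 8 := by
      intro σ hσ
      have hJ := hJbB x r σ hxmem hr hσ
      have hx2 : x^2 ≤ c := hx2le x hxmem
      have h5 : |x^5 * Jb x r σ| = x^3 * (x^2 * |Jb x r σ|) := by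
        rw [abs_mul, abs_of_nonneg (by positivity : (0:ℝ) ≤ x^5)]; ring
      rw [h5]
      have h6 : x^2 * |Jb x r σ| ≤ c * M :=
        mul_le_mul hx2 hJ (abs_nonneg _) hc0.le
      have h7 : c * M = 1/8 := by rw [hc]; field_simp
      have h8' : x^2 * |Jb x r σ| ≤ 1/8 := by linarith
      have h9 : x^3 * (x^2 * |Jb x r σ|) ≤ x^3 * (1/8) :=
        mul_le_mul_of_nonneg_left h8' (by positivity)
      linarith
    rw [h23, h53, ← hx3]
    constructor
    · intro h
      have h' : Real.sin (Real.arcsin (-(x^2 * ρ₂ x r))) =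
          Real.sin (Real.pi * g r / x^3 - Real.pi/2 + x^2 * φ₂ x r) := by
        rw [harc]; linarith
      rw [Real.sin_eq_sin_iff] at h'
      obtain ⟨k, hk | hk⟩ := h'
      · -- θ = 2kπ + arcsin(-y), parity +1
        have hth : Real.pi * g r / x^3 - Real.pi/2 + x^2 * φ₂ x r =
            (2*(k:ℝ))*Real.pi + 1 * Real.arcsin (-(x^2 * ρ₂ x r)) := by
          rw [hk]; ring
        have heq := (theta_iff x (g r) (φ₂ x r) (ρ₂ x r) (2*(k:ℝ)) 1 hx0.ne' hy1 hy2).mp hth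
        have heq' : g r = (2*(k:ℝ) + 1/2)*x^3 + x^5 * Jb x r 1 := by
          simp only [hJbdef]; exact heq
        have hk0 : 0 ≤ k := by
          by_contra hneg
          push_neg at hneg
          have hk1 : k ≤ -1 := by omega
          have hkR : (k:ℝ) ≤ -1 := by exact_mod_cast hk1
          have hb := hx5b 1 (by norm_num)
          rcases abs_le.mp hb with ⟨hb1, hb2⟩
          have hx3p : 0 < x^3 := by positivity
          nlinarith
        refine ⟨2*k.toNat, ?_⟩
        have h0cast : ((k.toNat : ℕ) : ℝ) = (k : ℝ) := by
          exact_mod_cast Int.toNat_of_nonneg hk0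
        have hcast : ((2*k.toNat : ℕ) : ℝ) = 2*(k:ℝ) := by
          push_cast; rw [h0cast]
        have hpow : ((-1:ℝ))^(2*k.toNat) = 1 := by
          rw [pow_mul]; norm_num
        rw [hcast, hpow]
        exact heq'
      · -- θ = (2k+1)π - arcsin(-y), parity -1
        have hth : Real.pi * g r / x^3 - Real.pi/2 + x^2 * φ₂ x r =
            (2*(k:ℝ)+1)*Real.pi + (-1) * Real.arcsin (-(x^2 * ρ₂ x r)) := by
          rw [hk]; ring
        have heq := (theta_iff x (g r) (φ₂ x r) (ρ₂ x r) (2*(k:ℝ)+1) (-1) hx0.ne' hy1 hy2).mp hth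
        have heq' : g r = (2*(k:ℝ)+1 + 1/2)*x^3 + x^5 * Jb x r (-1) := by
          simp only [hJbdef]; exact heq
        have hk0 : 0 ≤ k := by
          by_contra hneg
          push_neg at hneg
          have hk1 : k ≤ -1 := by omega
          have hkR : (k:ℝ) ≤ -1 := by exact_mod_cast hk1
          have hb := hx5b (-1) (by norm_num)
          rcases abs_le.mp hb with ⟨hb1, hb2⟩
          have hx3p : 0 < x^3 := by positivity
          nlinarith
        refine ⟨2*k.toNat + 1, ?_⟩
        have h0cast : ((k.toNat : ℕ) : ℝ) = (k : ℝ) := by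
          exact_mod_cast Int.toNat_of_nonneg hk0
        have hcast : ((2*k.toNat + 1 : ℕ) : ℝ) = 2*(k:ℝ)+1 := by
          push_cast; rw [h0cast]
        have hpow : ((-1:ℝ))^(2*k.toNat + 1) = -1 := by
          rw [pow_succ, pow_mul]; norm_num
        rw [hcast, hpow]
        exact heq'
    · rintro ⟨n, hn⟩
      have hsin : Real.sin (Real.arcsin (-(x^2 * ρ₂ x r))) =
          Real.sin (Real.pi * g r / x^3 - Real.pi/2 + x^2 * φ₂ x r) := by
        rw [Real.sin_eq_sin_iff]
        rcases Nat.even_or_odd n with ⟨l, hl⟩ | ⟨l, hl⟩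
        · refine ⟨(l:ℤ), Or.inl ?_⟩
          have hpow : ((-1:ℝ))^n = 1 := by
            rw [hl, ← two_mul, pow_mul]; norm_num
          have hcast : ((n:ℝ)) = 2*(l:ℝ) := by rw [hl]; push_cast; ring
          rw [hpow, hcast] at hn
          have heq' : g r = (2*(l:ℝ) + 1/2)*x^3 + x^5 *
              (-(φ₂ x r + 1 * (ρ₂ x r * Afun (x^2 * ρ₂ x r)))/Real.pi) := by
            simp only [hJbdef] at hn; exact hn
          have hth := (theta_iff x (g r) (φ₂ x r) (ρ₂ x r) (2*(l:ℝ)) 1 hx0.ne' hy1 hy2).mpr heq'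
          rw [hth]; push_cast; ring
        · refine ⟨(l:ℤ), Or.inr ?_⟩
          have hpow : ((-1:ℝ))^n = -1 := by
            rw [hl, pow_succ, pow_mul]; norm_num
          have hcast : ((n:ℝ)) = 2*(l:ℝ)+1 := by rw [hl]; push_cast; ring
          rw [hpow, hcast] at hn
          have heq' : g r = ((2*(l:ℝ)+1) + 1/2)*x^3 + x^5 *
              (-(φ₂ x r + (-1) * (ρ₂ x r * Afun (x^2 * ρ₂ x r)))/Real.pi) := by
            simp only [hJbdef] at hn; exact hn
          have hth := (theta_iff x (g r) (φ₂ x r) (ρ₂ x r) (2*(l:ℝ)+1) (-1) hx0.ne' hy1 hy2).mpr heq'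
          rw [hth]; push_cast; ring
      rw [harc] at hsin
      linarith
  refine ⟨ξ₁, r₂₁, hξ₁0, hξ₁ξ₀, hr₂₁0, hr₂₁le, Jb, ?_, ?_, ?_⟩
  · -- smoothness
    intro σ hσ
    have hsub : (Ico (0:ℝ) (ξ₁ ^ ((1:ℝ)/3)) ×ˢ Icc (0:ℝ) r₂₁) ⊆
        Ico 0 (ξ₀ ^ ((1:ℝ)/3)) ×ˢ Icc 0 r₂₀ := by
      intro p hp
      refine ⟨⟨hp.1.1, lt_of_lt_of_le hp.1.2 ?_⟩, hp.2.1, hp.2.2.trans hr₂₁le⟩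
      calc ξ₁ ^ ((1:ℝ)/3) ≤ a := hξ₁13
      _ ≤ ξ₀ ^ ((1:ℝ)/3) := by rw [ha]; linarith
    have hφ' := hφ₂.mono hsub
    have hρ' := hρ₂.mono hsub
    have hinner : ContDiffOn ℝ (⊤ : ℕ∞) (fun p : ℝ × ℝ => p.1^2 * ρ₂ p.1 p.2)
        (Ico (0:ℝ) (ξ₁ ^ ((1:ℝ)/3)) ×ˢ Icc (0:ℝ) r₂₁) :=
      ((contDiff_fst.pow 2).contDiffOn).mul hρ'
    have hmaps : MapsTo (fun p : ℝ × ℝ => p.1^2 * ρ₂ p.1 p.2)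
        (Ico (0:ℝ) (ξ₁ ^ ((1:ℝ)/3)) ×ˢ Icc (0:ℝ) r₂₁) (Ioo (-1:ℝ) 1) := by
      intro p hp
      have h9 := hyB p.1 p.2 ⟨hp.1.1, hp.1.2.le⟩ hp.2
      rcases abs_le.mp h9 with ⟨l1, l2⟩
      constructor
      · show (-1:ℝ) < p.1^2 * ρ₂ p.1 p.2
        linarith
      · show p.1^2 * ρ₂ p.1 p.2 < (1:ℝ)
        linarith
    have hA := contDiffOn_Afun.comp hinner hmaps
    have hmul := hρ'.mul hA
    have hσmul := (contDiffOn_const (c := σ)).mul hmul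
    have hsum := hφ'.add hσmul
    have hfin := (hsum.neg).div_const Real.pi
    simp only [hJbdef]
    exact hfin
  · -- vanishing at the Weber points
    intro m hm
    have hmpos : (0:ℝ) < 2*(m:ℝ)+1 := by positivity
    set ξ : ℝ := (2*(m:ℝ)+1)⁻¹ with hξdef
    have hξpos : 0 < ξ := by positivity
    have hξle : ξ ≤ ξ₁ := hm
    have h0mem : (0:ℝ) ∈ Icc (0:ℝ) r₂₁ := ⟨le_refl _, hr₂₁0.le⟩
    have hzero := (hΔ₂zeros ξ ⟨hξpos, lt_of_le_of_lt hξle hξ₁lt⟩).mpr ⟨m, rfl⟩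
    obtain ⟨n, hn⟩ := (key ξ hξpos hξle 0 h0mem).mp hzero
    have hx13mem : ξ ^ ((1:ℝ)/3) ∈ Icc 0 (ξ₁ ^ ((1:ℝ)/3)) :=
      ⟨(Real.rpow_pos_of_pos hξpos _).le, Real.rpow_le_rpow hξpos.le hξle (by norm_num)⟩
    have hσ1 : |((-1:ℝ))^n| ≤ 1 := by rw [abs_pow, abs_neg, abs_one, one_pow]
    have hJ := hJbB (ξ ^ ((1:ℝ)/3)) 0 ((-1:ℝ)^n) hx13mem h0mem hσ1
    have h53 : ξ ^ ((5:ℝ)/3) = ξ * ξ ^ ((2:ℝ)/3) := by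
      rw [show (5:ℝ)/3 = 1 + 2/3 by norm_num, Real.rpow_add hξpos, Real.rpow_one]
    have h23le : ξ ^ ((2:ℝ)/3) ≤ c :=
      le_trans (Real.rpow_le_rpow hξpos.le hξle (by norm_num)) hξ₁23
    have hcM : c * M = 1/8 := by rw [hc]; field_simp
    have hE : |ξ ^ ((5:ℝ)/3) * Jb (ξ ^ ((1:ℝ)/3)) 0 ((-1:ℝ)^n)| ≤ ξ/8 := by
      rw [abs_mul, abs_of_nonneg (Real.rpow_pos_of_pos hξpos _).le, h53]
      have h1 : ξ ^ ((2:ℝ)/3) * |Jb (ξ ^ ((1:ℝ)/3)) 0 ((-1:ℝ)^n)| ≤ c * M :=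
        mul_le_mul h23le hJ (abs_nonneg _) hc0.le
      calc ξ * ξ ^ ((2:ℝ)/3) * |Jb (ξ ^ ((1:ℝ)/3)) 0 ((-1:ℝ)^n)|
          = ξ * (ξ ^ ((2:ℝ)/3) * |Jb (ξ ^ ((1:ℝ)/3)) 0 ((-1:ℝ)^n)|) := by ring
      _ ≤ ξ * (1/8) := by
          refine mul_le_mul_of_nonneg_left ?_ hξpos.le
          linarith
      _ = ξ/8 := by ring
    have hhalf : ((m:ℝ) + 1/2) * ξ = 1/2 := by
      rw [hξdef]; field_simp
    rw [hg0] at hn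
    have hdiff : ((n:ℝ) - (m:ℝ)) * ξ = -(ξ ^ ((5:ℝ)/3) * Jb (ξ ^ ((1:ℝ)/3)) 0 ((-1:ℝ)^n)) := by
      linear_combination -hn - hhalf
    have habs : |(n:ℝ) - (m:ℝ)| * ξ ≤ ξ/8 := by
      rw [← abs_of_pos hξpos, ← abs_mul, hdiff, abs_neg, abs_of_pos hξpos]
      exact hE
    have hnm : |(n:ℝ) - (m:ℝ)| ≤ 1/8 :=
      le_of_mul_le_mul_right (by linarith) hξpos
    have hne : n = m := by
      rcases lt_trichotomy n m with h | h | h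
      · exfalso
        have hc1' : (n:ℕ) + 1 ≤ m := h
        have : ((n:ℝ)) + 1 ≤ (m:ℝ) := by exact_mod_cast hc1'
        rcases abs_le.mp hnm with ⟨l1, l2⟩
        linarith
      · exact h
      · exfalso
        have hc1' : (m:ℕ) + 1 ≤ n := h
        have : ((m:ℝ)) + 1 ≤ (n:ℝ) := by exact_mod_cast hc1'
        rcases abs_le.mp hnm with ⟨l1, l2⟩
        linarith
    subst hne
    have hE0 : ξ ^ ((5:ℝ)/3) * Jb (ξ ^ ((1:ℝ)/3)) 0 ((-1:ℝ)^n) = 0 := by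
      linear_combination hdiff
    have h53ne : ξ ^ ((5:ℝ)/3) ≠ 0 := (Real.rpow_pos_of_pos hξpos _).ne'
    have hJ0 : Jb (ξ ^ ((1:ℝ)/3)) 0 ((-1:ℝ)^n) = 0 := by
      rcases mul_eq_zero.mp hE0 with h | h
      · exact absurd h h53ne
      · exact h
    have hxm : ξ ^ ((1:ℝ)/3) = (2*(n:ℝ)+1) ^ (-(1:ℝ)/3) := by
      rw [hξdef, ← Real.rpow_neg_one (2*(n:ℝ)+1), ← Real.rpow_mul hmpos.le]
      norm_num
    rw [← hxm]
    exact hJ0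
  · -- the equivalence
    exact fun ξ hξ r hr => key ξ hξ.1 hξ.2.le r hr
end

section
/- Let b ∈ (0, 1] and V(t) = b·sin(t³) + t². Then V(t) > 0 for all t ≥ 1, the function φ(t) := V(t)^{−1/4}·(d²/dt²)(V(t)^{−1/4}) satisfies φ(t) = (9/4)·b·t·sin(t³) + O(t^{−1}) as t → ∞ (i.e., there is a constant C with |φ(t) − (9/4)·b·t·sin(t³)| ≤ C·t^{−1} for all t ≥ 1), and φ is not Lebesgue integrable on [1, ∞). -/
/-!
Writing `V = b sin(t³) + t²`, one has `φ = (5/16) V'² V^{-5/2} - (1/4) V'' V^{-3/2}`. Since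
`V ≍ t²`, `V' = O(t²)` and `V'' = -9 b t⁴ sin(t³) + O(t)`, every contribution is `O(1/t)`
except `(9/4) b t⁴ sin(t³) / V^{3/2}`, which is `(9/4) b t sin(t³) + O(1/t)` because
`|t³ - V^{3/2}| = O(t)`. For non-integrability, `|φ| ≥ (9/4) b t sin²(t³) - O(1/t)`, and
`∫₁ᵀ t sin²(t³) = T²/4 + O(1)` (the oscillating part `∫ t cos(2t³)` is bounded, by one
integration by parts), which beats the `O(log T)` error.
-/

open Set MeasureTheory Filter Topology

noncomputable def wkbErrorControl (V : ℝ → ℝ) (t : ℝ) : ℝ :=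
  V t ^ (-(1 : ℝ) / 4) * deriv (deriv fun s => V s ^ (-(1 : ℝ) / 4)) t

theorem wkbErrorControl_eq {V V' : ℝ → ℝ} {V'' t : ℝ}
    (hV : ∀ᶠ s in 𝓝 t, HasDerivAt V (V' s) s ∧ 0 < V s) (hV' : HasDerivAt V' V'' t) :
    wkbErrorControl V t =
      5 / 16 * V' t ^ 2 * V t ^ (-(5 : ℝ) / 2) - V'' / 4 * V t ^ (-(3 : ℝ) / 2) := by
  set p : ℝ := -1 / 4
  have hderiv : (deriv fun s => V s ^ p) =ᶠ[𝓝 t] fun s => V' s * p * V s ^ (p - 1) :=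
    hV.mono fun s ⟨hVs, hpos⟩ => (hVs.rpow_const (Or.inl hpos.ne')).deriv
  obtain ⟨hVt, hpos⟩ := hV.self_of_nhds
  have hderiv' : HasDerivAt (fun s => V' s * p * V s ^ (p - 1))
      (V'' * p * V t ^ (p - 1) + V' t * p * (V' t * (p - 1) * V t ^ (p - 1 - 1))) t :=
    (hV'.mul_const p).mul (hVt.rpow_const (Or.inl hpos.ne'))
  rw [wkbErrorControl, hderiv.deriv_eq, hderiv'.deriv]
  have hadd (q : ℝ) : V t ^ p * V t ^ q = V t ^ (p + q) := (Real.rpow_add hpos _ _).symm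
  have h3 : p + (p - 1) = -(3 : ℝ) / 2 := by norm_num [p]
  have h5 : p + (p - 1 - 1) = -(5 : ℝ) / 2 := by norm_num [p]
  rw [← h3, ← h5]
  linear_combination (p * V'') * hadd (p - 1) + (p * (p - 1) * V' t ^ 2) * hadd (p - 1 - 1)

theorem Real.rpow_neg_div_two_eq_inv_sqrt_pow {x : ℝ} (hx : 0 ≤ x) (n : ℕ) :
    x ^ (-(n : ℝ) / 2) = (√x ^ n)⁻¹ := by
  rw [neg_div, Real.rpow_neg hx, Real.rpow_div_two_eq_sqrt _ hx, Real.rpow_natCast]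

theorem abs_cube_sub_cube_le {t w : ℝ} (ht : 1 ≤ t) (hw : 0 < w) (hwt : |w ^ 2 - t ^ 2| ≤ 1) :
    |t ^ 3 - w ^ 3| ≤ 5 * t := by
  have hw2 : w ^ 2 ≤ 2 * t ^ 2 := by nlinarith [le_abs_self (w ^ 2 - t ^ 2)]
  have hdiff : |t - w| * t ≤ 1 :=
    calc |t - w| * t ≤ |t - w| * (t + w) := by gcongr; linarith
      _ = |w ^ 2 - t ^ 2| := by
        rw [← abs_of_pos (by linarith : 0 < t + w), ← abs_mul, ← abs_neg]; ring_nf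
      _ ≤ 1 := hwt
  calc |t ^ 3 - w ^ 3| = |t - w| * (t ^ 2 + t * w + w ^ 2) := by
        rw [← abs_of_pos (by positivity : 0 < t ^ 2 + t * w + w ^ 2), ← abs_mul]; ring_nf
    _ ≤ |t - w| * (5 * t ^ 2) := by gcongr; nlinarith
    _ = (|t - w| * t) * (5 * t) := by ring
    _ ≤ 5 * t := by nlinarith [abs_nonneg (t - w)]

noncomputable def sinCubePotential (b t : ℝ) : ℝ := b * Real.sin (t ^ 3) + t ^ 2

namespace sinCubePotential

variable {b t : ℝ}

theorem hasDerivAt (b t : ℝ) :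
    HasDerivAt (sinCubePotential b) (3 * b * t ^ 2 * Real.cos (t ^ 3) + 2 * t) t := by
  refine (((hasDerivAt_pow 3 t).sin.const_mul b).add (hasDerivAt_pow 2 t)).congr_deriv ?_
  push_cast
  ring

theorem hasDerivAt_deriv (b t : ℝ) :
    HasDerivAt (fun s => 3 * b * s ^ 2 * Real.cos (s ^ 3) + 2 * s)
      (6 * b * t * Real.cos (t ^ 3) - 9 * b * t ^ 4 * Real.sin (t ^ 3) + 2) t := by
  refine ((((hasDerivAt_pow 2 t).const_mul (3 * b)).mul (hasDerivAt_pow 3 t).cos).add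
    ((hasDerivAt_id t).const_mul 2)).congr_deriv ?_
  push_cast
  ring

theorem abs_sin_cube_lt_sq (ht : 0 < t) : |Real.sin (t ^ 3)| < t ^ 2 := by
  rcases le_or_gt t 1 with h1 | h1
  · calc |Real.sin (t ^ 3)| < |t ^ 3| := Real.abs_sin_lt_abs (by positivity)
      _ ≤ t ^ 2 := by rw [abs_of_pos (by positivity)]; nlinarith
  · calc |Real.sin (t ^ 3)| ≤ 1 := Real.abs_sin_le_one _
      _ < t ^ 2 := by nlinarith

theorem pos (hb : |b| ≤ 1) (ht : 0 < t) : 0 < sinCubePotential b t := by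
  have h := abs_sin_cube_lt_sq ht
  have : |b * Real.sin (t ^ 3)| < t ^ 2 := by
    rw [abs_mul]; nlinarith [abs_nonneg b, abs_nonneg (Real.sin (t ^ 3))]
  unfold sinCubePotential
  linarith [neg_abs_le (b * Real.sin (t ^ 3))]

theorem abs_sub_sq_le (hb : |b| ≤ 1) : |sinCubePotential b t - t ^ 2| ≤ 1 := by
  rw [sinCubePotential, add_sub_cancel_right, abs_mul]
  exact mul_le_one₀ hb (abs_nonneg _) (Real.abs_sin_le_one _)

theorem sq_div_two_le (hb₀ : 0 ≤ b) (hb₁ : b ≤ 1) (ht : 1 ≤ t) :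
    t ^ 2 / 2 ≤ sinCubePotential b t := by
  unfold sinCubePotential
  rcases le_or_gt (t ^ 3) Real.pi with h | h
  · have := Real.sin_nonneg_of_nonneg_of_le_pi (by positivity) h
    nlinarith
  · have : 2 ≤ t ^ 2 := by nlinarith [Real.pi_gt_three]
    nlinarith [Real.neg_one_le_sin (t ^ 3)]

theorem abs_deriv_le (hb : |b| ≤ 1) (ht : 1 ≤ t) :
    |3 * b * t ^ 2 * Real.cos (t ^ 3) + 2 * t| ≤ 5 * t ^ 2 := by
  have hbc : |b * Real.cos (t ^ 3)| ≤ 1 := by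
    rw [abs_mul]; exact mul_le_one₀ hb (abs_nonneg _) (Real.abs_cos_le_one _)
  obtain ⟨h₁, h₂⟩ := abs_le.1 hbc
  rw [abs_le]; constructor <;> nlinarith [sq_nonneg t]

theorem abs_six_mul_cos_add_two_le (hb : |b| ≤ 1) (ht : 1 ≤ t) :
    |6 * b * t * Real.cos (t ^ 3) + 2| ≤ 8 * t := by
  have hbc : |b * Real.cos (t ^ 3)| ≤ 1 := by
    rw [abs_mul]; exact mul_le_one₀ hb (abs_nonneg _) (Real.abs_cos_le_one _)
  obtain ⟨h₁, h₂⟩ := abs_le.1 hbc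
  rw [abs_le]; constructor <;> nlinarith

theorem wkbErrorControl_sub_eq (hb : |b| ≤ 1) (ht : 0 < t) :
    wkbErrorControl (sinCubePotential b) t - 9 / 4 * b * t * Real.sin (t ^ 3) =
      5 / 16 * (3 * b * t ^ 2 * Real.cos (t ^ 3) + 2 * t) ^ 2 / √(sinCubePotential b t) ^ 5
        - (6 * b * t * Real.cos (t ^ 3) + 2) / (4 * √(sinCubePotential b t) ^ 3)
        + 9 / 4 * (b * Real.sin (t ^ 3)) * t * (t ^ 3 - √(sinCubePotential b t) ^ 3)
          / √(sinCubePotential b t) ^ 3 := by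
  have hV : ∀ᶠ s in 𝓝 t, HasDerivAt (sinCubePotential b)
      (3 * b * s ^ 2 * Real.cos (s ^ 3) + 2 * s) s ∧ 0 < sinCubePotential b s :=
    mem_of_superset (Ioi_mem_nhds ht) fun s (hs : 0 < s) => ⟨hasDerivAt b s, pos hb hs⟩
  have hV₀ := pos hb ht
  have h3 := Real.rpow_neg_div_two_eq_inv_sqrt_pow hV₀.le 3
  have h5 := Real.rpow_neg_div_two_eq_inv_sqrt_pow hV₀.le 5
  push_cast at h3 h5
  have hw₀ : 0 < √(sinCubePotential b t) := Real.sqrt_pos.2 hV₀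
  rw [wkbErrorControl_eq hV (hasDerivAt_deriv b t), h3, h5]
  field_simp
  ring

theorem abs_wkbErrorControl_sub_le (hb₀ : 0 ≤ b) (hb₁ : b ≤ 1) (ht : 1 ≤ t) :
    |wkbErrorControl (sinCubePotential b) t - 9 / 4 * b * t * Real.sin (t ^ 3)| ≤
      400 * t⁻¹ := by
  have hb : |b| ≤ 1 := abs_le.2 ⟨by linarith, hb₁⟩
  have ht₀ : 0 < t := by linarith
  have hV₀ := (pos hb ht₀).le
  rw [wkbErrorControl_sub_eq hb ht₀]
  set w := √(sinCubePotential b t)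
  have hw : t / 2 ≤ w := by
    rw [Real.le_sqrt (by positivity) hV₀]
    linarith [sq_div_two_le hb₀ hb₁ ht, sq_nonneg t]
  have hw₀ : 0 < w := by linarith
  have hcube : |t ^ 3 - w ^ 3| ≤ 5 * t :=
    abs_cube_sub_cube_le ht hw₀ (Real.sq_sqrt hV₀ ▸ abs_sub_sq_le hb)
  have hV' : (3 * b * t ^ 2 * Real.cos (t ^ 3) + 2 * t) ^ 2 ≤ (5 * t ^ 2) ^ 2 := by
    rw [← sq_abs]; gcongr; exact abs_deriv_le hb ht
  have e₁ : |5 / 16 * (3 * b * t ^ 2 * Real.cos (t ^ 3) + 2 * t) ^ 2 / w ^ 5| ≤ 250 * t⁻¹ :=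
    calc _ = 5 / 16 * (3 * b * t ^ 2 * Real.cos (t ^ 3) + 2 * t) ^ 2 / w ^ 5 :=
          abs_of_nonneg (by positivity)
      _ ≤ 5 / 16 * (5 * t ^ 2) ^ 2 / (t / 2) ^ 5 := by gcongr
      _ = 250 * t⁻¹ := by field_simp; ring
  have e₂ : |(6 * b * t * Real.cos (t ^ 3) + 2) / (4 * w ^ 3)| ≤ 16 * t⁻¹ :=
    calc _ = |6 * b * t * Real.cos (t ^ 3) + 2| / (4 * w ^ 3) := by
          rw [abs_div, abs_of_pos (by positivity : 0 < 4 * w ^ 3)]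
      _ ≤ 8 * t / (4 * (t / 2) ^ 3) := by gcongr; exact abs_six_mul_cos_add_two_le hb ht
      _ = 16 * t⁻¹ * t⁻¹ := by field_simp; ring
      _ ≤ 16 * t⁻¹ := mul_le_of_le_one_right (by positivity) (inv_le_one_of_one_le₀ ht)
  have e₃ : |9 / 4 * (b * Real.sin (t ^ 3)) * t * (t ^ 3 - w ^ 3) / w ^ 3| ≤ 90 * t⁻¹ :=
    calc _ = 9 / 4 * |b * Real.sin (t ^ 3)| * t * |t ^ 3 - w ^ 3| / w ^ 3 := by
          rw [abs_div, abs_mul, abs_mul, abs_mul, abs_of_pos (by positivity : 0 < w ^ 3),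
            abs_of_pos ht₀]
          norm_num
      _ ≤ 9 / 4 * 1 * t * (5 * t) / (t / 2) ^ 3 := by
          gcongr
          rw [abs_mul]; exact mul_le_one₀ hb (abs_nonneg _) (Real.abs_sin_le_one _)
      _ = 90 * t⁻¹ := by field_simp; ring
  calc _ ≤ _ := (abs_add_le _ _).trans (add_le_add_left (abs_sub _ _) _)
    _ ≤ 250 * t⁻¹ + 16 * t⁻¹ + 90 * t⁻¹ := add_le_add_three e₁ e₂ e₃
    _ ≤ 400 * t⁻¹ := by linarith [inv_pos.2 ht₀]

end sinCubePotential

theorem pos_of_mem_uIcc_one {T x : ℝ} (hT : 1 ≤ T) (hx : x ∈ uIcc 1 T) : 0 < x := by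
  rw [uIcc_of_le hT] at hx
  linarith [hx.1]

theorem integral_zpow_neg_two {T : ℝ} (hT : 1 ≤ T) :
    ∫ x in (1 : ℝ)..T, x ^ (-2 : ℤ) = 1 - T⁻¹ := by
  rw [integral_zpow (Or.inr ⟨by norm_num, fun h => (pos_of_mem_uIcc_one hT h).ne' rfl⟩)]
  norm_num
  ring

theorem hasDerivAt_sin_two_mul_cube_div {x : ℝ} (hx : x ≠ 0) :
    HasDerivAt (fun y => Real.sin (2 * y ^ 3) / (6 * y))
      (x * Real.cos (2 * x ^ 3) - Real.sin (2 * x ^ 3) / (6 * x ^ 2)) x := by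
  have hsin := ((hasDerivAt_pow 3 x).const_mul 2).sin
  have hlin := (hasDerivAt_id' x).const_mul 6
  refine (hsin.div hlin (by simpa using hx)).congr_deriv ?_
  field_simp
  push_cast
  ring

theorem abs_integral_sin_two_mul_cube_div_le {T : ℝ} (hT : 1 ≤ T) :
    |∫ x in (1 : ℝ)..T, Real.sin (2 * x ^ 3) / (6 * x ^ 2)| ≤ 1 / 6 := by
  have hbound : IntervalIntegrable (fun x : ℝ => x ^ (-2 : ℤ) / 6) volume 1 T :=
    ContinuousOn.intervalIntegrable fun x hx =>
      ((continuousAt_zpow₀ _ _ (Or.inl (pos_of_mem_uIcc_one hT hx).ne')).div_const 6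
        ).continuousWithinAt
  calc _ ≤ ∫ x in (1 : ℝ)..T, x ^ (-2 : ℤ) / 6 := by
        rw [← Real.norm_eq_abs]
        refine intervalIntegral.norm_integral_le_of_norm_le hT
          (ae_of_all _ fun x hx => ?_) hbound
        have hx₀ : 0 < x := by linarith [hx.1]
        rw [Real.norm_eq_abs, abs_div, abs_of_pos (by positivity : 0 < 6 * x ^ 2)]
        calc _ ≤ 1 / (6 * x ^ 2) := by gcongr; exact Real.abs_sin_le_one _
          _ = x ^ (-2 : ℤ) / 6 := by field_simp
    _ = (1 - T⁻¹) / 6 := by rw [intervalIntegral.integral_div, integral_zpow_neg_two hT]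
    _ ≤ 1 / 6 := by linarith [inv_pos.2 (by linarith : 0 < T)]

theorem abs_integral_mul_cos_two_mul_cube_le {T : ℝ} (hT : 1 ≤ T) :
    |∫ x in (1 : ℝ)..T, x * Real.cos (2 * x ^ 3)| ≤ 1 / 2 := by
  have hcont : ContinuousOn (fun x => Real.sin (2 * x ^ 3) / (6 * x ^ 2)) (uIcc 1 T) :=
    ContinuousOn.div (by fun_prop) (by fun_prop) fun x hx => by
      have := pos_of_mem_uIcc_one hT hx; positivity
  have hparts := intervalIntegral.integral_eq_sub_of_hasDerivAt
    (fun x hx => hasDerivAt_sin_two_mul_cube_div (pos_of_mem_uIcc_one hT hx).ne')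
    (((continuous_id.mul (by fun_prop)).continuousOn).sub hcont).intervalIntegrable
  rw [intervalIntegral.integral_sub (by apply Continuous.intervalIntegrable; fun_prop)
    hcont.intervalIntegrable, sub_eq_iff_eq_add] at hparts
  have hboundary (x : ℝ) (hx : 1 ≤ x) : |Real.sin (2 * x ^ 3) / (6 * x)| ≤ 1 / 6 := by
    rw [abs_div, abs_of_pos (by positivity : 0 < 6 * x),
      div_le_div_iff₀ (by positivity) (by norm_num)]
    nlinarith [Real.abs_sin_le_one (2 * x ^ 3)]
  rw [hparts, sub_eq_add_neg]
  linarith [abs_add_three (Real.sin (2 * T ^ 3) / (6 * T)) (-(Real.sin (2 * 1 ^ 3) / (6 * 1)))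
    (∫ x in (1 : ℝ)..T, Real.sin (2 * x ^ 3) / (6 * x ^ 2)), hboundary T hT, hboundary 1 le_rfl,
    abs_neg (Real.sin (2 * 1 ^ 3) / (6 * 1)), abs_integral_sin_two_mul_cube_div_le hT]

theorem integral_mul_sin_cube_sq_ge {T : ℝ} (hT : 1 ≤ T) :
    (T ^ 2 - 2) / 4 ≤ ∫ x in (1 : ℝ)..T, x * Real.sin (x ^ 3) ^ 2 := by
  have hhalf : (fun x : ℝ => x * Real.sin (x ^ 3) ^ 2) =
      fun x => x / 2 - x * Real.cos (2 * x ^ 3) / 2 := by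
    ext x; rw [Real.sin_sq_eq_half_sub]; ring
  rw [hhalf, intervalIntegral.integral_sub (by apply Continuous.intervalIntegrable; fun_prop)
    (by apply Continuous.intervalIntegrable; fun_prop), intervalIntegral.integral_div,
    intervalIntegral.integral_div, integral_id]
  linarith [abs_le.1 (abs_integral_mul_cos_two_mul_cube_le hT)]

theorem mul_sin_cube_sq_le_abs {φ : ℝ → ℝ} {c C x : ℝ} (hc : 0 ≤ c) (hx : 0 < x)
    (hφ : |φ x - c * x * Real.sin (x ^ 3)| ≤ C * x⁻¹) :
    c * (x * Real.sin (x ^ 3) ^ 2) - C * x⁻¹ ≤ |φ x| := by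
  have hsin : Real.sin (x ^ 3) ^ 2 ≤ |Real.sin (x ^ 3)| := by
    rw [← sq_abs]
    nlinarith [Real.abs_sin_le_one (x ^ 3), abs_nonneg (Real.sin (x ^ 3))]
  have hsq : c * (x * Real.sin (x ^ 3) ^ 2) ≤ |c * x * Real.sin (x ^ 3)| := by
    rw [abs_mul, abs_of_nonneg (by positivity : 0 ≤ c * x), ← mul_assoc]
    gcongr
  linarith [abs_sub_abs_le_abs_sub (c * x * Real.sin (x ^ 3)) (φ x),
    abs_sub_comm (c * x * Real.sin (x ^ 3)) (φ x)]

theorem integral_abs_ge_of_abs_sub_le {φ : ℝ → ℝ} {c C T : ℝ} (hc : 0 ≤ c) (hC : 0 ≤ C)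
    (hφ : ∀ t, 1 ≤ t → |φ t - c * t * Real.sin (t ^ 3)| ≤ C * t⁻¹)
    (hint : IntervalIntegrable φ volume 1 T) (hT : 1 ≤ T) :
    c * ((T ^ 2 - 2) / 4) - C * T ≤ ∫ x in (1 : ℝ)..T, |φ x| := by
  have hmain : IntervalIntegrable (fun x => c * (x * Real.sin (x ^ 3) ^ 2)) volume 1 T := by
    apply Continuous.intervalIntegrable; fun_prop
  have hinv : IntervalIntegrable (fun x : ℝ => C * x⁻¹) volume 1 T :=
    (intervalIntegral.intervalIntegrable_inv (fun x hx => (pos_of_mem_uIcc_one hT hx).ne')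
      continuousOn_id).const_mul C
  calc c * ((T ^ 2 - 2) / 4) - C * T
      ≤ c * (∫ x in (1 : ℝ)..T, x * Real.sin (x ^ 3) ^ 2) - C * Real.log T := by
        gcongr
        · exact integral_mul_sin_cube_sq_ge hT
        · linarith [Real.log_le_sub_one_of_pos (by linarith : 0 < T)]
    _ = ∫ x in (1 : ℝ)..T, (c * (x * Real.sin (x ^ 3) ^ 2) - C * x⁻¹) := by
        rw [intervalIntegral.integral_sub hmain hinv, intervalIntegral.integral_const_mul,
          intervalIntegral.integral_const_mul, integral_inv_of_pos one_pos (by linarith),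
          div_one]
    _ ≤ ∫ x in (1 : ℝ)..T, |φ x| :=
        intervalIntegral.integral_mono_on hT (hmain.sub hinv) hint.abs fun x hx =>
          mul_sin_cube_sq_le_abs hc (by linarith [hx.1]) (hφ x hx.1)

theorem not_integrableOn_Ici_one_of_abs_sub_le {φ : ℝ → ℝ} {c C : ℝ} (hc : 0 < c)
    (hφ : ∀ t, 1 ≤ t → |φ t - c * t * Real.sin (t ^ 3)| ≤ C * t⁻¹) :
    ¬ IntegrableOn φ (Ici 1) := by
  intro hint
  have hC : 0 ≤ C := by simpa using (abs_nonneg _).trans (hφ 1 le_rfl)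
  set M := ∫ x in Ici (1 : ℝ), |φ x|
  have hgrowth (T : ℝ) (hT : 1 ≤ T) : c * ((T ^ 2 - 2) / 4) - C * T ≤ M := by
    refine (integral_abs_ge_of_abs_sub_le hc.le hC hφ
      ((intervalIntegrable_iff_integrableOn_Icc_of_le hT).2
        (hint.mono_set Icc_subset_Ici_self)) hT).trans ?_
    rw [intervalIntegral.integral_of_le hT]
    exact setIntegral_mono_set hint.abs (ae_of_all _ fun x => abs_nonneg _)
      (Ioc_subset_Ioi_self.trans Ioi_subset_Ici_self).eventuallyLE
  set T := max 1 (4 * (M + C + c) / c)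
  have hT : 4 * (M + C + c) / c ≤ T := le_max_right _ _
  rw [div_le_iff₀ hc] at hT
  have hT₁ : 1 ≤ T := le_max_left _ _
  have hM : 0 ≤ M := integral_nonneg fun x => abs_nonneg _
  nlinarith [hgrowth T hT₁, mul_le_mul_of_nonneg_left hT (by linarith : 0 ≤ T)]

/-- The potential `V(t) = b sin(t³) + t²` with `b ∈ (0, 1]`
is positive on `[1, ∞)`, its WKB error control function
`φ(t) = V(t)^{-1/4} (d²/dt²)(V(t)^{-1/4})` satisfies
`φ(t) = (9/4) b t sin(t³) + O(t⁻¹)` as `t → ∞`, and `φ` is not Lebesgue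
integrable on `[1, ∞)`. -/
theorem stmt18 (b : ℝ) (hb : b ∈ Ioc (0 : ℝ) 1) :
    (∀ t : ℝ, 1 ≤ t → 0 < b * Real.sin (t ^ 3) + t ^ 2) ∧
    (∃ C : ℝ, ∀ t : ℝ, 1 ≤ t →
      |(b * Real.sin (t ^ 3) + t ^ 2) ^ (-(1 : ℝ)/4) *
          deriv (deriv fun s : ℝ =>
            (b * Real.sin (s ^ 3) + s ^ 2) ^ (-(1 : ℝ)/4)) t -
        (9/4) * b * t * Real.sin (t ^ 3)| ≤ C * t⁻¹) ∧
    ¬ IntegrableOn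
        (fun t : ℝ => (b * Real.sin (t ^ 3) + t ^ 2) ^ (-(1 : ℝ)/4) *
          deriv (deriv fun s : ℝ =>
            (b * Real.sin (s ^ 3) + s ^ 2) ^ (-(1 : ℝ)/4)) t)
        (Ici 1) volume := by
  obtain ⟨hb₀, hb₁⟩ := hb
  have hest (t : ℝ) (ht : 1 ≤ t) :
      |wkbErrorControl (sinCubePotential b) t - 9 / 4 * b * t * Real.sin (t ^ 3)| ≤
        400 * t⁻¹ :=
    sinCubePotential.abs_wkbErrorControl_sub_le hb₀.le hb₁ ht
  exact ⟨fun t ht => sinCubePotential.pos (abs_le.2 ⟨by linarith, hb₁⟩) (by linarith),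
    ⟨400, hest⟩, not_integrableOn_Ici_one_of_abs_sub_le (by positivity) hest⟩
end
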